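/- arXiv:hep-th/0308092 — 7 statements merged into one kernel-verified Lean document; each statement's English description precedes it below -/
import Mathlib

section
/- Suppose K = J ∘ J is diagonalizable over ℝ, i.e. V is the direct sum of the eigenspaces of K. Then: every eigenvalue of K is nonzero; each eigenspace V_t of K is invariant under J; distinct eigenspaces of K are orthogonal with respect to η; the restriction of η to each eigenspace is nondegenerate; and each eigenspace of K has even dimension. -/
/-!
Because θ is alternating and η symmetric, `θ a b = η (J a) b` makes `J` skew-adjoint for η, so
`K = J * J` is η-self-adjoint and commutes with `J`; nondegeneracy of θ makes `J` injective, hence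
`0` is not an eigenvalue of `K`. Self-adjointness makes distinct eigenspaces η-orthogonal, and since
they span `V`, a vector of `V_t` orthogonal to `V_t` is orthogonal to all of `V`. Restricted to
`V_t`, θ is then a nondegenerate alternating form, so `V_t` has even dimension: a skew-symmetric
matrix `M` of odd size has `det M = det Mᵀ = det (-M) = -det M`, hence `det M = 0`.
-/

open Module
open scoped Matrix

theorem Matrix.det_eq_zero_of_transpose_eq_neg {n R : Type*} [Fintype n] [DecidableEq n]
    [CommRing R] [NoZeroDivisors R] [CharZero R] {M : Matrix n n R} (hM : Mᵀ = -M)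
    (hn : Odd (Fintype.card n)) : M.det = 0 :=
  CharZero.eq_neg_self_iff.mp <| by
    conv_lhs => rw [← det_transpose, hM, det_neg, hn.neg_one_pow, neg_one_mul]

namespace LinearMap.BilinForm

variable {𝕜 V : Type*} [Field 𝕜] [AddCommGroup V] [Module 𝕜 V]

theorem even_finrank_of_isAlt [CharZero 𝕜] [FiniteDimensional 𝕜 V]
    {B : LinearMap.BilinForm 𝕜 V} (hB : B.IsAlt) (hsep : B.SeparatingLeft) : Even (finrank 𝕜 V) := by
  classical
  let b := finBasis 𝕜 V
  have hskew : (toMatrix b B)ᵀ = -(toMatrix b B) := by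
    ext i j
    simp only [Matrix.transpose_apply, Matrix.neg_apply, toMatrix_apply]
    rw [← hB.neg_eq]
  have hdet : (toMatrix b B).det ≠ 0 :=
    (nondegenerate_iff_det_ne_zero b).mp (.ofSeparatingLeft hsep)
  by_contra hodd
  exact hdet <| Matrix.det_eq_zero_of_transpose_eq_neg hskew <| by
    simpa using Nat.not_even_iff_odd.mp hodd

theorem apply_eq_zero_of_mem_eigenspace {B : LinearMap.BilinForm 𝕜 V} {f : End 𝕜 V}
    (hf : B.IsSelfAdjoint f) {s t : 𝕜} (hst : s ≠ t) {a b : V} (ha : a ∈ f.eigenspace s)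
    (hb : b ∈ f.eigenspace t) : B a b = 0 := by
  rw [End.mem_eigenspace_iff] at ha hb
  have h : s * B a b = t * B a b := by
    simpa [ha, hb] using hf a b
  exact (mul_eq_mul_right_iff.mp h).resolve_left hst

theorem separatingLeft_restrict_eigenspace {B : LinearMap.BilinForm 𝕜 V} (hB : B.SeparatingLeft)
    {f : End 𝕜 V} (hf : B.IsSelfAdjoint f) (hdiag : ⨆ t, f.eigenspace t = ⊤) (t : 𝕜) :
    (B.restrict (f.eigenspace t)).SeparatingLeft := by
  intro a ha
  have hle : ⨆ s, f.eigenspace s ≤ LinearMap.ker (B a) := iSup_le fun s v hv => by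
    rcases eq_or_ne t s with rfl | hts
    · exact ha ⟨v, hv⟩
    · exact apply_eq_zero_of_mem_eigenspace hf hts a.2 hv
  exact Subtype.ext <| hB a fun v => hle (hdiag ▸ Submodule.mem_top)

theorem separatingLeft_restrict_compLeft {B : LinearMap.BilinForm 𝕜 V} {J : End 𝕜 V}
    (hJ : Function.Injective J) {W : Submodule 𝕜 V} (hW : Set.MapsTo J W W)
    (hB : (B.restrict W).SeparatingLeft) : ((B.compLeft J).restrict W).SeparatingLeft := by
  intro a ha
  have hJa : (⟨J a, hW a.2⟩ : W) = 0 := hB _ ha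
  exact Subtype.ext <| hJ <| by simpa using congrArg Subtype.val hJa

theorem isSkewAdjoint_of_isAlt_compLeft {B : LinearMap.BilinForm 𝕜 V} (hB : B.IsSymm)
    {J : End 𝕜 V} (hBJ : (B.compLeft J).IsAlt) : B.IsSkewAdjoint J := fun a b => by
  rw [← compLeft_apply, ← hBJ.neg_eq, compLeft_apply, hB.eq, Pi.neg_apply, map_neg]

theorem _root_.LinearMap.IsSkewAdjoint.isSelfAdjoint_mul_self {B : LinearMap.BilinForm 𝕜 V}
    {J : End 𝕜 V} (hJ : B.IsSkewAdjoint J) : B.IsSelfAdjoint (J * J) := by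
  have hJ' : IsAdjointPair B B J ⇑(-J) := hJ
  have hJJ := hJ'.mul hJ'
  rwa [neg_mul_neg] at hJJ

end LinearMap.BilinForm

open LinearMap.BilinForm in
/-- If `K = J ∘ J` is diagonalizable over `ℝ` (i.e. `V` is the direct sum of
the eigenspaces of `K`), then every eigenvalue of `K` is nonzero, each eigenspace is
`J`-invariant, distinct eigenspaces are `η`-orthogonal, the restriction of `η` to each
eigenspace is nondegenerate, and each eigenspace has even dimension. -/
theorem stmt_2 {V : Type*} [AddCommGroup V] [Module ℝ V] [FiniteDimensional ℝ V]
    (η θ : V →ₗ[ℝ] V →ₗ[ℝ] ℝ)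
    (hηsymm : ∀ a b, η a b = η b a)
    (hηnondeg : ∀ a, (∀ b, η a b = 0) → a = 0)
    (hθalt : ∀ a, θ a a = 0)
    (hθnondeg : ∀ a, (∀ b, θ a b = 0) → a = 0)
    (J : Module.End ℝ V) (hJ : ∀ a b, θ a b = η (J a) b)
    (K : Module.End ℝ V) (hK : K = J * J)
    (hdiag : (⨆ t : ℝ, K.eigenspace t) = ⊤) :
    (∀ t : ℝ, K.HasEigenvalue t → t ≠ 0) ∧
    (∀ (t : ℝ) (v : V), v ∈ K.eigenspace t → J v ∈ K.eigenspace t) ∧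
    (∀ s t : ℝ, s ≠ t →
      ∀ a ∈ K.eigenspace s, ∀ b ∈ K.eigenspace t, η a b = 0) ∧
    (∀ t : ℝ, K.HasEigenvalue t →
      ∀ a : K.eigenspace t, (∀ b : K.eigenspace t, η (a : V) (b : V) = 0) → a = 0) ∧
    (∀ t : ℝ, K.HasEigenvalue t → Even (Module.finrank ℝ (K.eigenspace t))) := by
  have hθ : θ = compLeft η J := LinearMap.ext₂ hJ
  subst hθ hK
  have hJ_ker : ∀ a, J a = 0 → a = 0 := fun a ha => hθnondeg a fun b => by
    rw [compLeft_apply, ha, map_zero, LinearMap.zero_apply]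
  have hK_sa : η.IsSelfAdjoint (J * J) :=
    (isSkewAdjoint_of_isAlt_compLeft ⟨hηsymm⟩ hθalt).isSelfAdjoint_mul_self
  have hJ_mapsTo (t : ℝ) : Set.MapsTo J ((J * J).eigenspace t) ((J * J).eigenspace t) :=
    Module.End.mapsTo_genEigenspace_of_comm ((Commute.refl J).mul_left (Commute.refl J)) t 1
  have hη_restrict := separatingLeft_restrict_eigenspace hηnondeg hK_sa hdiag
  refine ⟨fun t ht ht0 => ?_, hJ_mapsTo, fun s t hst a ha b hb =>
    apply_eq_zero_of_mem_eigenspace hK_sa hst ha hb, fun t _ => hη_restrict t, fun t _ => ?_⟩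
  · have hK_ker : ∀ a, (J * J) a = 0 → a = 0 := fun a ha => hJ_ker a (hJ_ker (J a) ha)
    have hK_tfae := (LinearMap.not_hasEigenvalue_zero_tfae (J * J)).out 0 5
    exact hK_tfae.mpr hK_ker (ht0 ▸ ht)
  · have hθ_restrict := separatingLeft_restrict_compLeft
      ((injective_iff_map_eq_zero J).mpr hJ_ker) (hJ_mapsTo t) (hη_restrict t)
    exact even_finrank_of_isAlt (fun a => hθalt a) hθ_restrict
end

section
/- Let V be a finite-dimensional real vector space, η a nondegenerate symmetric bilinear form on V, and J : V → V a linear operator with J ∘ J = id_V and η(J a, b) + η(a, J b) = 0 for all a, b ∈ V, and let V₊ be the +1 eigenspace of J. Then the restriction map λ ↦ λ|_{V₊} is an isomorphism of real Lie algebras from the Lie algebra {λ : V → V linear | λ ∘ J = J ∘ λ and η(λ a, b) + η(a, λ b) = 0 for all a, b} (with commutator bracket) onto the general linear Lie algebra gl(V₊) of all linear endomorphisms of V₊. -/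
attribute [local instance 100] LieRing.ofAssociativeRing

/-!
Restriction to `V₊` preserves brackets, so only bijectivity is at stake. If `l ∈ g` vanishes
on `V₊`, then `l J = -l` (as `v + J v ∈ V₊`), and moving `J` and `l` across `η` gives
`η (l a) b = -η (l a) b`, so `l = 0`. Conversely, for `f ∈ gl(V₊)` put `F = f ∘ (1 + J)/2`,
so that `F J = J F = F`. Skewness of `J` turns this into `F† J = J F† = -F†` for the
`η`-adjoint `F†`, hence `L = F - F†` commutes with `J`, is `η`-skew (as `η` is symmetric), and
agrees with `f` on `V₊`, where `F†` vanishes.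
-/

namespace LieSubalgebra

variable {R M : Type*} [CommRing R] [AddCommGroup M] [Module R M]

def restrictLieHom (g : LieSubalgebra R (Module.End R M)) (p : Submodule R M)
    (h : ∀ l ∈ g, Set.MapsTo l p p) : g →ₗ⁅R⁆ Module.End R p where
  toFun l := (l : Module.End R M).restrict (h l l.2)
  map_add' _ _ := rfl
  map_smul' _ _ := rfl
  map_lie' := rfl

@[simp]
theorem coe_restrictLieHom_apply (g : LieSubalgebra R (Module.End R M))
    (p : Submodule R M) (h : ∀ l ∈ g, Set.MapsTo l p p) (l : g) (v : p) :
    (g.restrictLieHom p h l v : M) = (l : Module.End R M) v :=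
  rfl

end LieSubalgebra

theorem eq_zero_of_eq_neg (K : Type*) {V : Type*} [Field K] [NeZero (2 : K)] [AddCommGroup V]
    [Module K V] {x : V} (h : x = -x) : x = 0 := by
  have h2 : (2 : K) • x = 0 := by
    rw [two_smul]
    nth_rewrite 2 [h]
    exact add_neg_cancel x
  exact (smul_eq_zero.mp h2).resolve_left two_ne_zero

namespace Module.End

variable {K V : Type*} [Field K] [AddCommGroup V] [Module K V] {J : Module.End K V}

theorem mem_eigenspace_one_iff {v : V} : v ∈ J.eigenspace 1 ↔ J v = v := by
  rw [mem_eigenspace_iff, one_smul]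

theorem add_apply_mem_eigenspace_one (hJ : J * J = 1) (v : V) : v + J v ∈ J.eigenspace 1 := by
  rw [mem_eigenspace_one_iff, map_add, ← mul_apply, hJ, one_apply, add_comm]

theorem eq_zero_of_eigenspace_one_le_ker [NeZero (2 : K)] {η : LinearMap.BilinForm K V}
    (hη : η.SeparatingLeft) (hJ2 : J * J = 1) (hJ : ∀ a b, η (J a) b + η a (J b) = 0)
    {l : Module.End K V} (hlJ : l * J = J * l) (hl : ∀ a b, η (l a) b + η a (l b) = 0)
    (h0 : J.eigenspace 1 ≤ LinearMap.ker l) : l = 0 := by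
  have hlJ' : ∀ v, l (J v) = -l v := fun v =>
    eq_neg_of_add_eq_zero_right (by rw [← map_add]; exact h0 (add_apply_mem_eigenspace_one hJ2 v))
  have hJl : ∀ v, J (l v) = l (J v) := fun v => (LinearMap.congr_fun hlJ v).symm
  ext a
  refine hη _ fun b => eq_zero_of_eq_neg K ?_
  calc η (l a) b = -η (l (J a)) b := by rw [hlJ', map_neg, LinearMap.neg_apply, neg_neg]
    _ = η (J a) (l b) := by rw [eq_neg_of_add_eq_zero_left (hl (J a) b), neg_neg]
    _ = -η a (J (l b)) := eq_neg_of_add_eq_zero_left (hJ a (l b))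
    _ = η a (l b) := by rw [hJl, hlJ', map_neg, neg_neg]
    _ = -η (l a) b := eq_neg_of_add_eq_zero_right (hl a b)

-- `(1 + J) / 2` is the projection onto `V₊` along the `-1` eigenspace.
noncomputable def extendEigenspaceOne (hJ2 : J * J = 1) (f : Module.End K (J.eigenspace 1)) :
    Module.End K V :=
  (2⁻¹ : K) • ((J.eigenspace 1).subtype ∘ₗ f ∘ₗ
    (1 + J).codRestrict (J.eigenspace 1) (add_apply_mem_eigenspace_one hJ2))

section Extend

variable (hJ2 : J * J = 1) (f : Module.End K (J.eigenspace 1))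

theorem extendEigenspaceOne_mul : extendEigenspaceOne hJ2 f * J = extendEigenspaceOne hJ2 f := by
  ext v
  have : (1 + J) * J = 1 + J := by rw [add_mul, hJ2, one_mul, add_comm]
  simp only [extendEigenspaceOne, mul_apply, LinearMap.smul_apply, LinearMap.comp_apply]
  congr 3
  exact Subtype.ext (LinearMap.congr_fun this v)

theorem mul_extendEigenspaceOne : J * extendEigenspaceOne hJ2 f = extendEigenspaceOne hJ2 f := by
  ext v
  simp only [extendEigenspaceOne, mul_apply, LinearMap.smul_apply, LinearMap.comp_apply, map_smul,
    Submodule.subtype_apply]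
  rw [mem_eigenspace_one_iff.mp (f _).2]

theorem extendEigenspaceOne_apply_coe [NeZero (2 : K)] (v : J.eigenspace 1) :
    extendEigenspaceOne hJ2 f v = f v := by
  have : (1 + J).codRestrict (J.eigenspace 1) (add_apply_mem_eigenspace_one hJ2) v = (2 : K) • v :=
    Subtype.ext (by simp [mem_eigenspace_one_iff.mp v.2, two_smul])
  simp [extendEigenspaceOne, this, smul_smul, inv_mul_cancel₀ (two_ne_zero (α := K))]

end Extend

section Adjoint

variable {η : LinearMap.BilinForm K V} {F G : Module.End K V}

theorem leftAdjoint_mul_eq_neg (hη : η.SeparatingLeft) (hJ : ∀ a b, η (J a) b + η a (J b) = 0)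
    (hGF : LinearMap.IsAdjointPair η η G F) (hJF : J * F = F) : G * J = -G := by
  ext x
  refine eq_neg_of_add_eq_zero_left (hη _ fun y => ?_)
  have hJFy := hJ x (F y)
  rw [← mul_apply, hJF] at hJFy
  rw [map_add, LinearMap.add_apply, mul_apply, hGF, hGF]
  linear_combination hJFy

theorem mul_leftAdjoint_eq_neg (hη : η.SeparatingLeft) (hJ : ∀ a b, η (J a) b + η a (J b) = 0)
    (hGF : LinearMap.IsAdjointPair η η G F) (hFJ : F * J = F) : J * G = -G := by
  ext x
  refine eq_neg_of_add_eq_zero_left (hη _ fun y => ?_)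
  have hFJy : F (J y) = F y := by rw [← mul_apply, hFJ]
  rw [map_add, LinearMap.add_apply, mul_apply, hGF, ← hFJy, ← hGF]
  exact hJ (G x) y

theorem skew_sub_of_isAdjointPair (hη : ∀ a b, η a b = η b a)
    (hGF : LinearMap.IsAdjointPair η η G F) (a b : V) :
    η ((F - G) a) b + η a ((F - G) b) = 0 := by
  rw [LinearMap.sub_apply, LinearMap.sub_apply, map_sub, map_sub, LinearMap.sub_apply, hGF a b,
    hη a (G b), hGF b a, hη b]
  ring

end Adjoint

theorem exists_comm_skew_extension [FiniteDimensional K V] [NeZero (2 : K)]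
    {η : LinearMap.BilinForm K V} (hηsymm : ∀ a b, η a b = η b a) (hη : η.SeparatingLeft)
    (hJ2 : J * J = 1) (hJ : ∀ a b, η (J a) b + η a (J b) = 0)
    (f : Module.End K (J.eigenspace 1)) :
    ∃ L : Module.End K V, (L * J = J * L ∧ ∀ a b, η (L a) b + η a (L b) = 0) ∧
      ∀ v : J.eigenspace 1, L v = f v := by
  set F := extendEigenspaceOne hJ2 f
  set G := η.leftAdjointOfNondegenerate (.ofSeparatingLeft hη) F
  have hGF : LinearMap.IsAdjointPair η η G F := η.isAdjointPairLeftAdjointOfNondegenerate _ F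
  have hGJ := leftAdjoint_mul_eq_neg hη hJ hGF (mul_extendEigenspaceOne hJ2 f)
  have hJG := mul_leftAdjoint_eq_neg hη hJ hGF (extendEigenspaceOne_mul hJ2 f)
  refine ⟨F - G, ⟨?_, skew_sub_of_isAdjointPair hηsymm hGF⟩, fun v => ?_⟩
  · rw [sub_mul, mul_sub, extendEigenspaceOne_mul, mul_extendEigenspaceOne, hGJ, hJG]
  · have hGv : G v = 0 := eq_zero_of_eq_neg K <|
      calc G v = G (J v) := by rw [mem_eigenspace_one_iff.mp v.2]
        _ = -G v := by rw [← mul_apply, hGJ, LinearMap.neg_apply]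
    rw [LinearMap.sub_apply, hGv, sub_zero, extendEigenspaceOne_apply_coe]

end Module.End

/-- If `J ∘ J = id` and `J` is `η`-skew-adjoint, with `V₊` the `+1` eigenspace
of `J`, then restriction to `V₊` is an isomorphism of real Lie algebras from the Lie algebra
of linear operators commuting with `J` and skew-adjoint with respect to `η` onto the general
linear Lie algebra `gl(V₊)` of all linear endomorphisms of `V₊`. -/
theorem stmt_5 {V : Type*} [AddCommGroup V] [Module ℝ V] [FiniteDimensional ℝ V]
    (η : V →ₗ[ℝ] V →ₗ[ℝ] ℝ)
    (hηsymm : ∀ a b, η a b = η b a)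
    (hηnondeg : ∀ a, (∀ b, η a b = 0) → a = 0)
    (J : Module.End ℝ V) (hJ2 : J * J = 1)
    (hJskew : ∀ a b, η (J a) b + η a (J b) = 0)
    (g : LieSubalgebra ℝ (Module.End ℝ V))
    (hg : ∀ l : Module.End ℝ V,
      l ∈ g ↔ (l * J = J * l ∧ ∀ a b, η (l a) b + η a (l b) = 0)) :
    ∃ Φ : g ≃ₗ⁅ℝ⁆ Module.End ℝ (J.eigenspace 1),
      ∀ (l : g) (v : J.eigenspace 1), ((Φ l) v : V) = (l : Module.End ℝ V) v := by
  have hmaps : ∀ l ∈ g, Set.MapsTo l (J.eigenspace 1) (J.eigenspace 1) := fun l hl =>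
    Module.End.mapsTo_genEigenspace_of_comm ((hg l).1 hl).1.symm 1 1
  set φ := g.restrictLieHom (J.eigenspace 1) hmaps
  have hinj : Function.Injective φ := by
    refine (injective_iff_map_eq_zero φ).2 fun l hl => Subtype.ext ?_
    obtain ⟨hlJ, hl_skew⟩ := (hg l).1 l.2
    exact Module.End.eq_zero_of_eigenspace_one_le_ker hηnondeg hJ2 hJskew hlJ hl_skew
      fun v hv => by simpa [φ] using congr(($hl ⟨v, hv⟩ : V))
  have hsurj : Function.Surjective φ := fun f => by
    obtain ⟨L, hL, hLf⟩ := Module.End.exists_comm_skew_extension hηsymm hηnondeg hJ2 hJskew f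
    exact ⟨⟨L, (hg L).2 hL⟩, LinearMap.ext fun v => Subtype.ext (hLf v)⟩
  exact ⟨LieEquiv.ofBijective φ ⟨hinj, hsurj⟩, fun l v => rfl⟩
end

section
/- If η is positive definite, dim V = n, and K = J ∘ J is a scalar multiple of the identity, K = t · id_V for some real t, then the Lie algebra g(η,θ) is isomorphic as a real Lie algebra to u(n/2) and its real dimension equals n²/4. -/
/-!
Since `θ` is alternating, `J` is `η`-skew; positivity of `η` and nondegeneracy of `θ` then force
`t < 0`, so `I = J / √(-t)` is a complex structure with `η (I a) b = -η a (I b)`. This makes `V` a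
complex vector space of dimension `n / 2` with Hermitian inner product `η + i η(I ·, ·)`, and an
endomorphism preserving `η` and `θ` commutes with `J` (by nondegeneracy of `η`), so `g(η, θ)` is the
Lie algebra of complex-linear skew-adjoint maps. An orthonormal basis identifies it with `u(n/2)`,
whose real dimension is `(n/2)²` because multiplication by `i` exchanges Hermitian and
skew-Hermitian matrices.
-/

open Matrix

attribute [local instance 100] LieRing.ofAssociativeRing

open scoped InnerProductSpace

theorem two_mul_finrank_skewAdjoint (A : Type*) [AddCommGroup A] [Module ℂ A] [StarAddMonoid A]
    [StarModule ℂ A] [FiniteDimensional ℝ A] :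
    2 * Module.finrank ℝ (skewAdjoint A) = Module.finrank ℝ A := by
  let e : skewAdjoint A ≃ₗ[ℝ] selfAdjoint A :=
    { skewAdjoint.negISMul with
      invFun := fun a => ⟨Complex.I • (a : A), by simp⟩
      left_inv := fun a => Subtype.ext (skewAdjoint.I_smul_neg_I a)
      right_inv := fun a => Subtype.ext (by simp [smul_smul]) }
  have : FiniteDimensional ℝ (skewAdjoint A) :=
    FiniteDimensional.finiteDimensional_submodule (skewAdjoint.submodule ℝ A)
  have : FiniteDimensional ℝ (selfAdjoint A) :=
    FiniteDimensional.finiteDimensional_submodule (selfAdjoint.submodule ℝ A)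
  rw [(StarModule.decomposeProdAdjoint ℝ A).finrank_eq, Module.finrank_prod, e.finrank_eq]
  ring

theorem finrank_skewHermitian {ι : Type*} [Fintype ι] [DecidableEq ι]
    (u : LieSubalgebra ℝ (Matrix ι ι ℂ)) (hu : ∀ A, A ∈ u ↔ Aᴴ = -A) :
    Module.finrank ℝ u = Fintype.card ι ^ 2 := by
  have hsub : u.toSubmodule = skewAdjoint.submodule ℝ _ := by
    ext A
    exact hu A
  have h2 := two_mul_finrank_skewAdjoint (Matrix ι ι ℂ)
  rw [Module.finrank_matrix, Complex.finrank_real_complex] at h2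
  have h3 : Module.finrank ℝ u = Module.finrank ℝ (skewAdjoint (Matrix ι ι ℂ)) :=
    (LinearEquiv.ofEq _ _ hsub).finrank_eq
  linarith

theorem LinearMap.star_eq_neg_iff {𝕜 E : Type*} [RCLike 𝕜] [NormedAddCommGroup E]
    [InnerProductSpace 𝕜 E] [FiniteDimensional 𝕜 E] (f : E →ₗ[𝕜] E) :
    star f = -f ↔ ∀ x y, ⟪f x, y⟫_𝕜 = -⟪x, f y⟫_𝕜 := by
  rw [star_eq_adjoint, eq_comm, eq_adjoint_iff]
  simp only [neg_apply, inner_neg_left, neg_eq_iff_eq_neg]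

section RealEnd

variable {E : Type*} [NormedAddCommGroup E] [InnerProductSpace ℂ E] [FiniteDimensional ℂ E]
  [Module ℝ E] [IsScalarTower ℝ ℂ E]

noncomputable def OrthonormalBasis.toRealEndLieHom {ι : Type*} [Fintype ι] [DecidableEq ι]
    (b : OrthonormalBasis ι ℂ E) : Matrix ι ι ℂ →ₗ⁅ℝ⁆ Module.End ℝ E where
  toFun A := ((LinearMap.toMatrixOrthonormal b).symm A).restrictScalars ℝ
  map_add' A B := by simp
  map_smul' r A := by
    ext v
    rw [← algebraMap_smul ℂ r A, map_smul]
    exact algebraMap_smul ℂ r _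
  map_lie' {A B} := by
    ext
    simp only [Ring.lie_def, map_sub, map_mul]
    rfl

theorem OrthonormalBasis.toRealEndLieHom_injective {ι : Type*} [Fintype ι] [DecidableEq ι]
    (b : OrthonormalBasis ι ℂ E) : Function.Injective b.toRealEndLieHom :=
  fun _ _ h => (LinearMap.toMatrixOrthonormal b).symm.injective
    (LinearMap.restrictScalars_injective ℝ h)

theorem nonempty_lieEquiv_skewHermitian (g : LieSubalgebra ℝ (Module.End ℝ E))
    (hg : ∀ l, l ∈ g ↔ (∀ (z : ℂ) v, l (z • v) = z • l v) ∧ ∀ x y, ⟪l x, y⟫_ℂ = -⟪x, l y⟫_ℂ)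
    (u : LieSubalgebra ℝ (Matrix (Fin (Module.finrank ℂ E)) (Fin (Module.finrank ℂ E)) ℂ))
    (hu : ∀ A, A ∈ u ↔ Aᴴ = -A) : Nonempty (g ≃ₗ⁅ℝ⁆ u) := by
  set b := stdOrthonormalBasis ℂ E
  set M := LinearMap.toMatrixOrthonormal b
  have hmap : u.map b.toRealEndLieHom = g := by
    ext l
    rw [LieSubalgebra.mem_map, hg]
    constructor
    · rintro ⟨A, hA, rfl⟩
      have hskew : star (M.symm A) = -M.symm A := by
        rw [← map_star, star_eq_conjTranspose, (hu A).1 hA, map_neg]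
      exact ⟨fun z v => map_smul (M.symm A) z v, (LinearMap.star_eq_neg_iff _).1 hskew⟩
    · rintro ⟨hlin, hskew⟩
      let f : E →ₗ[ℂ] E := { l with map_smul' := hlin }
      refine ⟨M f, (hu _).2 ?_, ?_⟩
      · rw [← star_eq_conjTranspose, ← map_star, (LinearMap.star_eq_neg_iff f).2 hskew, map_neg]
      · ext v
        show (M.symm (M f)) v = l v
        rw [StarAlgEquiv.symm_apply_apply]
        rfl
  subst hmap
  exact ⟨(LieSubalgebra.equivMapOfInjective _ _ b.toRealEndLieHom_injective).symm⟩

end RealEnd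

section ComplexStructure

variable {V : Type*} [AddCommGroup V] [Module ℝ V]

abbrev Module.End.complexModule (I : Module.End ℝ V) (hI : I * I = -1) : Module ℂ V :=
  Module.compHom V (Complex.liftAux I hI).toRingHom

theorem Module.End.complexModule_smul (I : Module.End ℝ V) (hI : I * I = -1) (z : ℂ) (v : V) :
    letI := I.complexModule hI
    z • v = z.re • v + z.im • I v :=
  rfl

theorem Module.End.isScalarTower_complexModule (I : Module.End ℝ V) (hI : I * I = -1) :
    letI := I.complexModule hI
    IsScalarTower ℝ ℂ V := by
  let _ := I.complexModule hI
  exact ⟨fun r z v => by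
    show (Complex.liftAux I hI (r • z)) v = r • (Complex.liftAux I hI z) v
    rw [map_smul]; rfl⟩

end ComplexStructure

section HermitianForm

variable {V : Type*} [AddCommGroup V] [Module ℝ V] [Module ℂ V] [IsScalarTower ℝ ℂ V]

theorem complex_smul_eq_re_smul_add_im_smul (z : ℂ) (v : V) :
    z • v = z.re • v + z.im • Complex.I • v := by
  conv_lhs => rw [← Complex.re_add_im z]
  rw [add_smul, mul_smul, ← algebraMap_smul ℂ z.re v, ← algebraMap_smul ℂ z.im (Complex.I • v)]
  rfl

variable (η : V →ₗ[ℝ] V →ₗ[ℝ] ℝ)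

abbrev complexInnerCore (hsymm : ∀ a b, η a b = η b a) (hpos : ∀ v, v ≠ 0 → 0 < η v v)
    (hI : ∀ a b, η (Complex.I • a) b = -η a (Complex.I • b)) : InnerProductSpace.Core ℂ V where
  inner x y := ⟨η x y, η (Complex.I • x) y⟩
  conj_inner_symm x y := by
    apply Complex.ext
    · simp [hsymm]
    · simp [hI, hsymm y]
  re_inner_nonneg x := by
    rcases eq_or_ne x 0 with rfl | hx
    · simp
    · exact (hpos x hx).le
  add_left x y z := by
    apply Complex.ext <;> simp [smul_add]
  smul_left x y z := by
    have hII : Complex.I • Complex.I • x = -x := by rw [smul_smul, Complex.I_mul_I, neg_one_smul]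
    rw [complex_smul_eq_re_smul_add_im_smul z, smul_add, smul_comm Complex.I z.re,
      smul_comm Complex.I z.im, hII]
    apply Complex.ext <;> simp
  definite x h := by
    by_contra hx
    exact (hpos x hx).ne' (congrArg Complex.re h)

theorem map_smul_of_skew (hpos : ∀ v, v ≠ 0 → 0 < η v v) (l : Module.End ℝ V)
    (hl : ∀ a b, η (l a) b + η a (l b) = 0)
    (hlI : ∀ a b, η (Complex.I • l a) b + η (Complex.I • a) (l b) = 0) (z : ℂ) (v : V) :
    l (z • v) = z • l v := by
  have hcomm : l (Complex.I • v) = Complex.I • l v := by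
    have hw : ∀ b, η (l (Complex.I • v) - Complex.I • l v) b = 0 := fun b => by
      rw [map_sub, LinearMap.sub_apply]
      linarith [hl (Complex.I • v) b, hlI v b]
    rw [← sub_eq_zero]
    by_contra hne
    exact (hpos _ hne).ne' (hw _)
  rw [complex_smul_eq_re_smul_add_im_smul z v, complex_smul_eq_re_smul_add_im_smul z (l v),
    map_add, map_smul, map_smul, hcomm]

theorem nonempty_lieEquiv_skewHermitian_of_forms [FiniteDimensional ℝ V]
    (hsymm : ∀ a b, η a b = η b a) (hpos : ∀ v, v ≠ 0 → 0 < η v v)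
    (hI : ∀ a b, η (Complex.I • a) b = -η a (Complex.I • b))
    (g : LieSubalgebra ℝ (Module.End ℝ V))
    (hg : ∀ l, l ∈ g ↔ (∀ a b, η (l a) b + η a (l b) = 0) ∧
      ∀ a b, η (Complex.I • l a) b + η (Complex.I • a) (l b) = 0)
    (u : LieSubalgebra ℝ (Matrix (Fin (Module.finrank ℂ V)) (Fin (Module.finrank ℂ V)) ℂ))
    (hu : ∀ A, A ∈ u ↔ Aᴴ = -A) : Nonempty (g ≃ₗ⁅ℝ⁆ u) := by
  let core := complexInnerCore η hsymm hpos hI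
  let _ : NormedAddCommGroup V := core.toNormedAddCommGroup
  let _ : InnerProductSpace ℂ V := InnerProductSpace.ofCore core.toCore
  have : FiniteDimensional ℂ V := Module.Finite.of_restrictScalars_finite ℝ ℂ V
  refine nonempty_lieEquiv_skewHermitian g (fun l => (hg l).trans ?_) u hu
  have hinner : ∀ x y, ⟪x, y⟫_ℂ = ⟨η x y, η (Complex.I • x) y⟩ := fun _ _ => rfl
  simp only [hinner, Complex.ext_iff, Complex.neg_re, Complex.neg_im]
  constructor
  · rintro ⟨h1, h2⟩
    exact ⟨map_smul_of_skew η hpos l h1 h2, fun x y =>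
      ⟨eq_neg_of_add_eq_zero_left (h1 x y), eq_neg_of_add_eq_zero_left (h2 x y)⟩⟩
  · rintro ⟨-, h⟩
    exact ⟨fun a b => by linarith [(h a b).1], fun a b => by linarith [(h a b).2]⟩

end HermitianForm

section ScalarSquare

variable {V : Type*} [AddCommGroup V] [Module ℝ V]

theorem neg_of_mul_self_eq_smul [Nontrivial V] (η : V →ₗ[ℝ] V →ₗ[ℝ] ℝ)
    (hpos : ∀ v, v ≠ 0 → 0 < η v v) (J : Module.End ℝ V)
    (hskew : ∀ a b, η (J a) b = -η a (J b)) (hinj : ∀ v, J v = 0 → v = 0) (t : ℝ)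
    (hJJ : J * J = t • 1) : t < 0 := by
  obtain ⟨v, hv⟩ := exists_ne (0 : V)
  have hJv : J v ≠ 0 := fun h => hv (hinj v h)
  have key : t * η v v = -η (J v) (J v) := by
    rw [← hskew, ← Module.End.mul_apply, hJJ]
    simp
  nlinarith [hpos v hv, hpos (J v) hJv]

theorem exists_eq_smul_and_mul_self_eq_neg_one (η : V →ₗ[ℝ] V →ₗ[ℝ] ℝ)
    (hpos : ∀ v, v ≠ 0 → 0 < η v v) (J : Module.End ℝ V)
    (hskew : ∀ a b, η (J a) b = -η a (J b)) (hinj : ∀ v, J v = 0 → v = 0) (t : ℝ)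
    (hJJ : J * J = t • 1) : ∃ c : ℝ, c ≠ 0 ∧ ∃ I : Module.End ℝ V, I * I = -1 ∧ J = c • I := by
  rcases subsingleton_or_nontrivial V with hV | hV
  · exact ⟨1, one_ne_zero, J, Subsingleton.elim _ _, (one_smul ℝ J).symm⟩
  have ht := neg_of_mul_self_eq_smul η hpos J hskew hinj t hJJ
  have hc : √(-t) ≠ 0 := (Real.sqrt_pos.mpr (neg_pos.mpr ht)).ne'
  refine ⟨√(-t), hc, (√(-t))⁻¹ • J, ?_, by rw [smul_smul, mul_inv_cancel₀ hc, one_smul]⟩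
  rw [smul_mul_smul_comm, hJJ, smul_smul, ← mul_inv, Real.mul_self_sqrt (neg_nonneg.mpr ht.le),
    inv_neg, neg_mul, inv_mul_cancel₀ ht.ne, neg_smul, one_smul]

end ScalarSquare

/-- If `η` is positive definite, `dim V = n`, and `K = J ∘ J` is a scalar
multiple of the identity, then the Lie algebra `g(η,θ)` is isomorphic as a real Lie
algebra to `u(n/2)` and its real dimension equals `n²/4`. -/
theorem stmt_10 {V : Type*} [AddCommGroup V] [Module ℝ V] [FiniteDimensional ℝ V]
    (n : ℕ) (hn : Module.finrank ℝ V = n)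
    (η θ : V →ₗ[ℝ] V →ₗ[ℝ] ℝ)
    (hηsymm : ∀ a b, η a b = η b a)
    (hηpos : ∀ v : V, v ≠ 0 → 0 < η v v)
    (hθalt : ∀ a, θ a a = 0)
    (hθnondeg : ∀ a, (∀ b, θ a b = 0) → a = 0)
    (J : Module.End ℝ V) (hJ : ∀ a b, θ a b = η (J a) b)
    (K : Module.End ℝ V) (hK : K = J * J)
    (t : ℝ) (hKscalar : K = t • (1 : Module.End ℝ V))
    (g : LieSubalgebra ℝ (Module.End ℝ V))
    (hg : ∀ l : Module.End ℝ V, l ∈ g ↔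
      ((∀ a b, η (l a) b + η a (l b) = 0) ∧ (∀ a b, θ (l a) b + θ a (l b) = 0)))
    -- the compact unitary Lie algebras u(m) of skew-Hermitian complex m×m matrices
    (u : ∀ m : ℕ, LieSubalgebra ℝ (Matrix (Fin m) (Fin m) ℂ))
    (hu : ∀ (m : ℕ) (A : Matrix (Fin m) (Fin m) ℂ), A ∈ u m ↔ Aᴴ = -A) :
    Nonempty (g ≃ₗ⁅ℝ⁆ u (n / 2)) ∧ 4 * Module.finrank ℝ g = n ^ 2 := by
  have hJskew : ∀ a b, η (J a) b = -η a (J b) := fun a b => by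
    rw [← hJ, ← LinearMap.IsAlt.neg hθalt, hJ, hηsymm]
  have hJinj : ∀ v, J v = 0 → v = 0 := fun v hv => hθnondeg v fun b => by simp [hJ, hv]
  obtain ⟨c, hc, I, hI, rfl⟩ :=
    exists_eq_smul_and_mul_self_eq_neg_one η hηpos J hJskew hJinj t (hK ▸ hKscalar)
  let _ := I.complexModule hI
  have _ := I.isScalarTower_complexModule hI
  have hIsmul : ∀ v, Complex.I • v = I v := fun v => by simp [I.complexModule_smul hI]
  have hIskew : ∀ a b, η (Complex.I • a) b = -η a (Complex.I • b) := fun a b => by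
    have := hJskew a b
    simp only [hIsmul, LinearMap.smul_apply, map_smul, smul_eq_mul, ← mul_neg] at this ⊢
    exact mul_left_cancel₀ hc this
  have hg' : ∀ l, l ∈ g ↔ (∀ a b, η (l a) b + η a (l b) = 0) ∧
      ∀ a b, η (Complex.I • l a) b + η (Complex.I • a) (l b) = 0 := fun l => by
    simp only [hg, hJ, hIsmul, LinearMap.smul_apply, map_smul, smul_eq_mul, ← mul_add,
      mul_eq_zero, hc, false_or]
  have hdim : n = 2 * Module.finrank ℂ V := by
    rw [← hn, ← Module.finrank_mul_finrank ℝ ℂ V, Complex.finrank_real_complex]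
  obtain ⟨e⟩ := nonempty_lieEquiv_skewHermitian_of_forms η hηsymm hηpos hIskew g hg' (u _) (hu _)
  rw [hdim, Nat.mul_div_cancel_left _ two_pos]
  refine ⟨⟨e⟩, ?_⟩
  rw [e.toLinearEquiv.finrank_eq, finrank_skewHermitian _ (hu _), Fintype.card_fin]
  ring
end

section
/- Let n > 2 and let η = (η_{μν}) be a constant invertible symmetric real n×n matrix. A smooth vector field ξ : ℝⁿ → ℝⁿ satisfies the conformal Killing equation η_{μρ} ∂_ν ξ^ρ + η_{νρ} ∂_μ ξ^ρ = (2/n) η_{μν} ∂_ρ ξ^ρ at every point if and only if there exist constants a^μ ∈ ℝⁿ, a real n×n matrix λ^μ_ν with λ_{μν} := η_{μρ} λ^ρ_ν antisymmetric, a constant c ∈ ℝ, and b^μ ∈ ℝⁿ, such that ξ^μ(x) = a^μ + λ^μ_ν x^ν + c x^μ + (b^ν η_{νρ} x^ρ) x^μ − (1/2) b^μ (η_{νρ} x^ν x^ρ) for all x ∈ ℝⁿ. -/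
open Matrix

variable {n : ℕ}

lemma clm_eq_sum' (L : (Fin n → ℝ) →L[ℝ] ℝ) (v : Fin n → ℝ) :
    L v = ∑ ν, v ν * L (Pi.single ν 1) := by
  have hv : v = ∑ ν, v ν • (Pi.single ν 1 : Fin n → ℝ) := by
    funext j
    simp [Finset.sum_apply, Pi.single_apply]
  conv_lhs => rw [hv]
  rw [map_sum]
  simp [smul_eq_mul]

lemma const_of_dirDeriv_zero (φ : (Fin n → ℝ) → ℝ) (hφ : Differentiable ℝ φ)
    (h : ∀ (x : Fin n → ℝ) (ν : Fin n), fderiv ℝ φ x (Pi.single ν 1) = 0) :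
    ∀ x, φ x = φ 0 := by
  intro x
  apply is_const_of_fderiv_eq_zero hφ _ x 0
  intro y
  apply ContinuousLinearMap.ext
  intro v
  rw [clm_eq_sum' (fderiv ℝ φ y) v]
  simp [h]

lemma fderiv_component' (ξ : (Fin n → ℝ) → Fin n → ℝ) (hξ : Differentiable ℝ ξ)
    (x v : Fin n → ℝ) (ρ : Fin n) :
    fderiv ℝ ξ x v ρ = fderiv ℝ (fun y => ξ y ρ) x v := by
  have h : ∀ i, DifferentiableAt ℝ (fun y => ξ y i) x := fun i =>
    ((ContinuousLinearMap.proj i : (Fin n → ℝ) →L[ℝ] ℝ).differentiable.comp hξ) x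
  rw [show ξ = (fun x i => ξ x i) from rfl, fderiv_pi h]
  simp

lemma dirDeriv_contDiff (φ : (Fin n → ℝ) → ℝ) (hφ : ContDiff ℝ (⊤ : ℕ∞) φ) (v : Fin n → ℝ) :
    ContDiff ℝ (⊤ : ℕ∞) (fun x => fderiv ℝ φ x v) := by
  have h1 : ContDiff ℝ (⊤ : ℕ∞) (fderiv ℝ φ) := hφ.fderiv_right (by simp)
  exact (ContinuousLinearMap.apply ℝ ℝ v).contDiff.comp h1

lemma second_deriv_symm (φ : (Fin n → ℝ) → ℝ) (hφ : ContDiff ℝ (⊤ : ℕ∞) φ)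
    (x v w : Fin n → ℝ) :
    fderiv ℝ (fun y => fderiv ℝ φ y w) x v = fderiv ℝ (fun y => fderiv ℝ φ y v) x w := by
  have hdiff : Differentiable ℝ (fderiv ℝ φ) :=
    (hφ.fderiv_right (m := (⊤ : ℕ∞)) (by simp)).differentiable (by simp)
  have hkey : ∀ u : Fin n → ℝ,
      fderiv ℝ (fun y => fderiv ℝ φ y u) x = (fderiv ℝ (fderiv ℝ φ) x).flip u := by
    intro u
    have := fderiv_clm_apply (c := fderiv ℝ φ) (u := fun _ => u) (hdiff x)
      (differentiableAt_const u)
    simpa using this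
  rw [hkey w, hkey v]
  have hsymm := second_derivative_symmetric (f := φ) (f' := fderiv ℝ φ)
    (f'' := fderiv ℝ (fderiv ℝ φ) x) (fun y => (hφ.differentiable (by simp) y).hasFDerivAt)
    ((hdiff x).hasFDerivAt) v w
  simp only [ContinuousLinearMap.flip_apply]
  exact hsymm

lemma dirderiv_sum_const_mul (F : Fin n → (Fin n → ℝ) → ℝ) (x v : Fin n → ℝ)
    (hF : ∀ ρ, DifferentiableAt ℝ (F ρ) x) (cc : Fin n → ℝ) :
    fderiv ℝ (fun y => ∑ ρ, cc ρ * F ρ y) x v = ∑ ρ, cc ρ * fderiv ℝ (F ρ) x v := by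
  have h : HasFDerivAt (fun y => ∑ ρ, cc ρ * F ρ y)
      (∑ ρ, cc ρ • fderiv ℝ (F ρ) x) x :=
    HasFDerivAt.fun_sum fun ρ _ => ((hF ρ).hasFDerivAt).const_mul (cc ρ)
  rw [h.fderiv]
  simp [ContinuousLinearMap.sum_apply]

lemma dirderiv_const_mul (F : (Fin n → ℝ) → ℝ) (x v : Fin n → ℝ)
    (hF : DifferentiableAt ℝ F x) (c : ℝ) :
    fderiv ℝ (fun y => c * F y) x v = c * fderiv ℝ F x v := by
  rw [fderiv_const_mul hF c]
  rfl

variable {n : ℕ}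

lemma model_hasFDerivAt (A : ℝ) (B : Fin n → ℝ) (C : Matrix (Fin n) (Fin n) ℝ)
    (x : Fin n → ℝ) :
    HasFDerivAt (fun y : Fin n → ℝ => A + (∑ ν, B ν * y ν) + ∑ σ, ∑ ν, C σ ν * (y σ * y ν))
      ((∑ ν, B ν • (ContinuousLinearMap.proj ν : (Fin n → ℝ) →L[ℝ] ℝ)) +
        ∑ σ, ∑ ν, C σ ν • (x σ • (ContinuousLinearMap.proj ν : (Fin n → ℝ) →L[ℝ] ℝ)
          + x ν • (ContinuousLinearMap.proj σ : (Fin n → ℝ) →L[ℝ] ℝ))) x := by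
  have hcoord : ∀ i : Fin n, HasFDerivAt (fun y : Fin n → ℝ => y i)
      (ContinuousLinearMap.proj i : (Fin n → ℝ) →L[ℝ] ℝ) x :=
    fun i => (ContinuousLinearMap.proj i : (Fin n → ℝ) →L[ℝ] ℝ).hasFDerivAt
  have hB : HasFDerivAt (fun y : Fin n → ℝ => ∑ ν, B ν * y ν)
      (∑ ν, B ν • (ContinuousLinearMap.proj ν : (Fin n → ℝ) →L[ℝ] ℝ)) x :=
    HasFDerivAt.fun_sum fun ν _ => (hcoord ν).const_mul (B ν)
  have hC : HasFDerivAt (fun y : Fin n → ℝ => ∑ σ, ∑ ν, C σ ν * (y σ * y ν))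
      (∑ σ, ∑ ν, C σ ν • (x σ • (ContinuousLinearMap.proj ν : (Fin n → ℝ) →L[ℝ] ℝ)
          + x ν • (ContinuousLinearMap.proj σ : (Fin n → ℝ) →L[ℝ] ℝ))) x :=
    HasFDerivAt.fun_sum fun σ _ => HasFDerivAt.fun_sum fun ν _ =>
      (((hcoord σ).mul (hcoord ν))).const_mul (C σ ν)
  have := ((hasFDerivAt_const A x).fun_add hB).fun_add hC
  simpa using this

lemma model_fderiv_eval (A : ℝ) (B : Fin n → ℝ) (C : Matrix (Fin n) (Fin n) ℝ)
    (x : Fin n → ℝ) (τ : Fin n) :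
    fderiv ℝ (fun y : Fin n → ℝ => A + (∑ ν, B ν * y ν) + ∑ σ, ∑ ν, C σ ν * (y σ * y ν))
      x (Pi.single τ 1)
      = B τ + (∑ ν, C τ ν * x ν) + ∑ σ, C σ τ * x σ := by
  rw [(model_hasFDerivAt A B C x).fderiv]
  simp [ContinuousLinearMap.sum_apply, Pi.single_apply, Finset.mul_sum, mul_ite,
    Finset.sum_add_distrib, mul_comm]
  ring

lemma model_differentiable (A : ℝ) (B : Fin n → ℝ) (C : Matrix (Fin n) (Fin n) ℝ) :
    Differentiable ℝ (fun y : Fin n → ℝ =>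
      A + (∑ ν, B ν * y ν) + ∑ σ, ∑ ν, C σ ν * (y σ * y ν)) :=
  fun x => (model_hasFDerivAt A B C x).differentiableAt

lemma integrate_quadratic (φ : (Fin n → ℝ) → ℝ) (hφ : Differentiable ℝ φ)
    (B : Fin n → ℝ) (C : Matrix (Fin n) (Fin n) ℝ)
    (h : ∀ (x : Fin n → ℝ) (τ : Fin n),
      fderiv ℝ φ x (Pi.single τ 1) = B τ + (∑ ν, C τ ν * x ν) + ∑ σ, C σ τ * x σ) :
    ∀ x, φ x = φ 0 + (∑ ν, B ν * x ν) + ∑ σ, ∑ ν, C σ ν * (x σ * x ν) := by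
  set m : (Fin n → ℝ) → ℝ :=
    fun y => φ 0 + (∑ ν, B ν * y ν) + ∑ σ, ∑ ν, C σ ν * (y σ * y ν) with hm
  have hmd : Differentiable ℝ m := model_differentiable (φ 0) B C
  have hψ : ∀ x, φ x - m x = φ 0 - m 0 := by
    apply const_of_dirDeriv_zero _ (hφ.sub hmd)
    intro x ν
    rw [fderiv_sub (hφ x) (hmd x)]
    simp only [ContinuousLinearMap.sub_apply]
    rw [h x ν, hm, model_fderiv_eval (φ 0) B C x ν]
    ring
  intro x
  have h0 : m 0 = φ 0 := by simp [hm]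
  have := hψ x
  rw [h0] at this
  have : φ x = m x := by linarith
  rw [this, hm]

lemma dirderiv_congr {φ ψ : (Fin n → ℝ) → ℝ} (h : ∀ x, φ x = ψ x) (x v : Fin n → ℝ) :
    fderiv ℝ φ x v = fderiv ℝ ψ x v := by
  have : φ = ψ := funext h
  rw [this]

theorem fwd (n : ℕ) (hn : 2 < n)
    (η : Matrix (Fin n) (Fin n) ℝ) (hηsymm : ηᵀ = η) (hηinv : IsUnit η)
    (ξ : (Fin n → ℝ) → (Fin n → ℝ)) (hξ : ContDiff ℝ (⊤ : ℕ∞) ξ)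
    (hCKE : ∀ (x : Fin n → ℝ) (μ ν : Fin n),
        (∑ ρ, η μ ρ * fderiv ℝ ξ x (Pi.single ν 1) ρ) +
          (∑ ρ, η ν ρ * fderiv ℝ ξ x (Pi.single μ 1) ρ) =
        (2 / (n : ℝ)) * η μ ν * ∑ ρ, fderiv ℝ ξ x (Pi.single ρ 1) ρ) :
    (∃ (a : Fin n → ℝ) (l : Matrix (Fin n) (Fin n) ℝ) (c : ℝ) (b : Fin n → ℝ),
        (∀ μ ν, (∑ ρ, η μ ρ * l ρ ν) = -(∑ ρ, η ν ρ * l ρ μ)) ∧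
        ∀ (x : Fin n → ℝ) (μ : Fin n),
          ξ x μ = a μ + (∑ ν, l μ ν * x ν) + c * x μ +
            (∑ ν, ∑ ρ, b ν * η ν ρ * x ρ) * x μ -
            (1 / 2) * b μ * (∑ ν, ∑ ρ, η ν ρ * x ν * x ρ)) := by
  have hn0 : (n : ℝ) ≠ 0 := Nat.cast_ne_zero.mpr (by omega)
  have hdξ : Differentiable ℝ ξ := hξ.differentiable (by simp)
  have hsym : ∀ i j, η i j = η j i := fun i j => congrFun (congrFun hηsymm j) i
  have hdet : IsUnit η.det := (Matrix.isUnit_iff_isUnit_det η).mp hηinv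
  set θ : Matrix (Fin n) (Fin n) ℝ := η⁻¹ with hθdef
  have hθη : ∀ τ ν, (∑ μ, θ τ μ * η μ ν) = if τ = ν then 1 else 0 := by
    intro τ ν
    rw [show (∑ μ, θ τ μ * η μ ν) = (θ * η) τ ν from (Matrix.mul_apply).symm, hθdef,
      Matrix.nonsing_inv_mul η hdet, Matrix.one_apply]
  have hηθ : ∀ τ ν, (∑ μ, η τ μ * θ μ ν) = if τ = ν then 1 else 0 := by
    intro τ ν
    rw [show (∑ μ, η τ μ * θ μ ν) = (η * θ) τ ν from (Matrix.mul_apply).symm, hθdef,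
      Matrix.mul_nonsing_inv η hdet, Matrix.one_apply]
  have hθsym : ∀ i j, θ i j = θ j i := by
    have h1 : θᵀ = θ := by rw [hθdef, Matrix.transpose_nonsing_inv, hηsymm]
    exact fun i j => congrFun (congrFun h1 j) i
  -- component functions and derived quantities
  set Pf : Fin n → Fin n → (Fin n → ℝ) → ℝ :=
    fun τ ρ x => fderiv ℝ (fun y => ξ y ρ) x (Pi.single τ 1) with hPf
  have hξc : ∀ ρ, ContDiff ℝ (⊤ : ℕ∞) (fun y => ξ y ρ) := fun ρ => contDiff_pi.mp hξ ρ
  have hPfsmooth : ∀ τ ρ, ContDiff ℝ (⊤ : ℕ∞) (Pf τ ρ) := fun τ ρ =>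
    dirDeriv_contDiff _ (hξc ρ) _
  have hPfdiff : ∀ τ ρ, Differentiable ℝ (Pf τ ρ) := fun τ ρ =>
    (hPfsmooth τ ρ).differentiable (by simp)
  set f : (Fin n → ℝ) → ℝ := fun x => (1/(n:ℝ)) * ∑ ρ, Pf ρ ρ x with hf
  have hfsmooth : ContDiff ℝ (⊤ : ℕ∞) f :=
    contDiff_const.mul (ContDiff.sum fun ρ _ => hPfsmooth ρ ρ)
  have hfdiff : Differentiable ℝ f := hfsmooth.differentiable (by simp)
  set g : Fin n → (Fin n → ℝ) → ℝ := fun σ x => fderiv ℝ f x (Pi.single σ 1) with hg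
  have hgsmooth : ∀ σ, ContDiff ℝ (⊤ : ℕ∞) (g σ) := fun σ => dirDeriv_contDiff f hfsmooth _
  have hgdiff : ∀ σ, Differentiable ℝ (g σ) := fun σ => (hgsmooth σ).differentiable (by simp)
  set D : Fin n → Fin n → Fin n → (Fin n → ℝ) → ℝ :=
    fun σ τ ρ x => fderiv ℝ (Pf τ ρ) x (Pi.single σ 1) with hD
  have hDsmooth : ∀ σ τ ρ, ContDiff ℝ (⊤ : ℕ∞) (D σ τ ρ) := fun σ τ ρ =>
    dirDeriv_contDiff _ (hPfsmooth τ ρ) _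
  have hDdiff : ∀ σ τ ρ, Differentiable ℝ (D σ τ ρ) := fun σ τ ρ =>
    (hDsmooth σ τ ρ).differentiable (by simp)
  set G : Fin n → Fin n → (Fin n → ℝ) → ℝ :=
    fun σ τ x => fderiv ℝ (g σ) x (Pi.single τ 1) with hG
  -- the conformal Killing equation in component form
  have hE : ∀ (x : Fin n → ℝ) (μ ν : Fin n),
      (∑ ρ, η μ ρ * Pf ν ρ x) + (∑ ρ, η ν ρ * Pf μ ρ x) = 2 * η μ ν * f x := by
    intro x μ ν
    have h0 := hCKE x μ ν
    simp only [fderiv_component' ξ hdξ] at h0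
    rw [hPf, hf]
    rw [h0]
    ring
  -- Clairaut symmetry for D in the two derivative slots
  have hDsym : ∀ (x : Fin n → ℝ) (σ τ ρ : Fin n), D σ τ ρ x = D τ σ ρ x := by
    intro x σ τ ρ
    rw [hD, hPf]
    exact second_deriv_symm _ (hξc ρ) x (Pi.single σ 1) (Pi.single τ 1)
  -- Clairaut symmetry for G
  have hGsym : ∀ (x : Fin n → ℝ) (σ τ : Fin n), G σ τ x = G τ σ x := by
    intro x σ τ
    rw [hG, hg]
    exact second_deriv_symm _ hfsmooth x (Pi.single τ 1) (Pi.single σ 1)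
  -- differentiated CKE
  have hE' : ∀ (x : Fin n → ℝ) (σ μ ν : Fin n),
      (∑ ρ, η μ ρ * D σ ν ρ x) + (∑ ρ, η ν ρ * D σ μ ρ x) = 2 * η μ ν * g σ x := by
    intro x σ μ ν
    have h1 := dirderiv_congr (fun x => hE x μ ν) x (Pi.single σ 1)
    rw [fderiv_fun_add ((Differentiable.fun_sum fun ρ _ =>
        (hPfdiff ν ρ).const_mul (η μ ρ)) x)
        ((Differentiable.fun_sum fun ρ _ => (hPfdiff μ ρ).const_mul (η ν ρ)) x)] at h1
    simp only [ContinuousLinearMap.add_apply] at h1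
    rw [dirderiv_sum_const_mul _ x (Pi.single σ 1) (fun ρ => hPfdiff ν ρ x) (fun ρ => η μ ρ),
        dirderiv_sum_const_mul _ x (Pi.single σ 1) (fun ρ => hPfdiff μ ρ x) (fun ρ => η ν ρ),
        dirderiv_const_mul _ x (Pi.single σ 1) (hfdiff x) (2 * η μ ν)] at h1
    exact h1
  -- pointwise formula for second derivatives (lowered)
  have hDval : ∀ (x : Fin n → ℝ) (σ μ ν : Fin n),
      (∑ ρ, η μ ρ * D σ ν ρ x) = η μ ν * g σ x + η μ σ * g ν x - η σ ν * g μ x := by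
    intro x σ μ ν
    have E1 := hE' x σ μ ν
    have E2 := hE' x ν σ μ
    have E3 := hE' x μ ν σ
    have e2a : (∑ ρ, η σ ρ * D ν μ ρ x) = ∑ ρ, η σ ρ * D μ ν ρ x :=
      Finset.sum_congr rfl fun ρ _ => by rw [hDsym x ν μ ρ]
    have e2b : (∑ ρ, η μ ρ * D ν σ ρ x) = ∑ ρ, η μ ρ * D σ ν ρ x :=
      Finset.sum_congr rfl fun ρ _ => by rw [hDsym x ν σ ρ]
    have e3a : (∑ ρ, η ν ρ * D μ σ ρ x) = ∑ ρ, η ν ρ * D σ μ ρ x :=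
      Finset.sum_congr rfl fun ρ _ => by rw [hDsym x μ σ ρ]
    rw [e2a, e2b, hsym σ μ] at E2
    rw [e3a, hsym ν σ] at E3
    linarith
  -- third derivatives
  set T : Fin n → Fin n → Fin n → Fin n → (Fin n → ℝ) → ℝ :=
    fun τ σ ν ρ x => fderiv ℝ (D σ ν ρ) x (Pi.single τ 1) with hT
  have hTsym : ∀ (x : Fin n → ℝ) (τ σ ν ρ : Fin n), T τ σ ν ρ x = T σ τ ν ρ x := by
    intro x τ σ ν ρ
    rw [hT, hD]
    exact second_deriv_symm _ (hPfsmooth ν ρ) x (Pi.single τ 1) (Pi.single σ 1)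
  have hTval : ∀ (x : Fin n → ℝ) (τ σ μ ν : Fin n),
      (∑ ρ, η μ ρ * T τ σ ν ρ x)
        = η μ ν * G σ τ x + η μ σ * G ν τ x - η σ ν * G μ τ x := by
    intro x τ σ μ ν
    have h1 := dirderiv_congr (fun x => hDval x σ μ ν) x (Pi.single τ 1)
    rw [dirderiv_sum_const_mul _ x (Pi.single τ 1) (fun ρ => hDdiff σ ν ρ x)
      (fun ρ => η μ ρ)] at h1
    rw [show (fun x => η μ ν * g σ x + η μ σ * g ν x - η σ ν * g μ x)
        = (fun x => η μ ν * g σ x + η μ σ * g ν x + (-(η σ ν)) * g μ x) from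
        funext fun x => by ring] at h1
    rw [fderiv_fun_add (((hgdiff σ).const_mul (η μ ν)).fun_add ((hgdiff ν).const_mul (η μ σ)) x)
        (((hgdiff μ).const_mul (-(η σ ν))) x),
      fderiv_fun_add (((hgdiff σ).const_mul (η μ ν)) x) (((hgdiff ν).const_mul (η μ σ)) x)] at h1
    simp only [ContinuousLinearMap.add_apply] at h1
    rw [dirderiv_const_mul _ x (Pi.single τ 1) (hgdiff σ x) (η μ ν),
      dirderiv_const_mul _ x (Pi.single τ 1) (hgdiff ν x) (η μ σ),
      dirderiv_const_mul _ x (Pi.single τ 1) (hgdiff μ x) (-(η σ ν))] at h1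
    rw [hT, hG]
    rw [h1]
    ring
  -- key constraint on the Hessian of f
  have h2key : ∀ (x : Fin n → ℝ) (σ μ ν τ : Fin n),
      η μ σ * G ν τ x - η σ ν * G μ τ x = η μ τ * G ν σ x - η τ ν * G μ σ x := by
    intro x σ μ ν τ
    have h1 := hTval x τ σ μ ν
    have h2 := hTval x σ τ μ ν
    have e2 : (∑ ρ, η μ ρ * T σ τ ν ρ x) = ∑ ρ, η μ ρ * T τ σ ν ρ x :=
      Finset.sum_congr rfl fun ρ _ => by rw [hTsym x σ τ ν ρ]
    rw [e2] at h2
    have h3 := hGsym x σ τ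
    rw [h3] at h1
    linarith
  -- the Hessian of f vanishes
  have hGzero : ∀ (x : Fin n → ℝ) (ν τ : Fin n), G ν τ x = 0 := by
    intro x ν τ
    set TG := ∑ σ, ∑ μ, θ σ μ * G μ σ x with hTG
    have hcontr : ∀ ν τ : Fin n, ((n:ℝ) - 2) * G ν τ x = -(η τ ν * TG) := by
      intro ν τ
      have hsum : (∑ σ, ∑ μ, θ σ μ * (η μ σ * G ν τ x - η σ ν * G μ τ x))
          = ∑ σ, ∑ μ, θ σ μ * (η μ τ * G ν σ x - η τ ν * G μ σ x) :=
        Finset.sum_congr rfl fun σ _ => Finset.sum_congr rfl fun μ _ => by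
          rw [h2key x σ μ ν τ]
      have split : ∀ (F K : Fin n → Fin n → ℝ),
          (∑ σ, ∑ μ, θ σ μ * (F σ μ - K σ μ))
            = (∑ σ, ∑ μ, θ σ μ * F σ μ) - (∑ σ, ∑ μ, θ σ μ * K σ μ) := by
        intro F K
        simp [mul_sub, Finset.sum_sub_distrib]
      rw [split, split] at hsum
      have p1 : (∑ σ, ∑ μ, θ σ μ * (η μ σ * G ν τ x)) = (n:ℝ) * G ν τ x := by
        have inner1 : ∀ σ : Fin n, (∑ μ, θ σ μ * (η μ σ * G ν τ x)) = G ν τ x := by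
          intro σ
          have : (∑ μ, θ σ μ * (η μ σ * G ν τ x)) = (∑ μ, θ σ μ * η μ σ) * G ν τ x := by
            rw [Finset.sum_mul]
            exact Finset.sum_congr rfl fun μ _ => by ring
          rw [this, hθη σ σ, if_pos rfl, one_mul]
        rw [Finset.sum_congr rfl fun σ _ => inner1 σ]
        simp [Finset.card_univ, mul_comm]
      have p2 : (∑ σ, ∑ μ, θ σ μ * (η σ ν * G μ τ x)) = G ν τ x := by
        rw [Finset.sum_comm]
        have inner2 : ∀ μ : Fin n, (∑ σ, θ σ μ * (η σ ν * G μ τ x))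
            = (if μ = ν then 1 else 0) * G μ τ x := by
          intro μ
          have e1 : (∑ σ, θ σ μ * (η σ ν * G μ τ x)) = (∑ σ, θ μ σ * η σ ν) * G μ τ x := by
            rw [Finset.sum_mul]
            exact Finset.sum_congr rfl fun σ _ => by rw [hθsym σ μ]; ring
          rw [e1, hθη μ ν]
        rw [Finset.sum_congr rfl fun μ _ => inner2 μ]
        simp
      have p3 : (∑ σ, ∑ μ, θ σ μ * (η μ τ * G ν σ x)) = G ν τ x := by
        have inner3 : ∀ σ : Fin n, (∑ μ, θ σ μ * (η μ τ * G ν σ x))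
            = (if σ = τ then 1 else 0) * G ν σ x := by
          intro σ
          have e1 : (∑ μ, θ σ μ * (η μ τ * G ν σ x)) = (∑ μ, θ σ μ * η μ τ) * G ν σ x := by
            rw [Finset.sum_mul]
            exact Finset.sum_congr rfl fun μ _ => by ring
          rw [e1, hθη σ τ]
        rw [Finset.sum_congr rfl fun σ _ => inner3 σ]
        simp
      have p4 : (∑ σ, ∑ μ, θ σ μ * (η τ ν * G μ σ x)) = η τ ν * TG := by
        rw [hTG, Finset.mul_sum]
        refine Finset.sum_congr rfl fun σ _ => ?_
        rw [Finset.mul_sum]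
        exact Finset.sum_congr rfl fun μ _ => by ring
      rw [p1, p2, p3, p4] at hsum
      linarith
    have hTG0 : TG = 0 := by
      have hsum2 : (∑ τ, ∑ ν, θ τ ν * (((n:ℝ) - 2) * G ν τ x))
          = ∑ τ, ∑ ν, θ τ ν * (-(η τ ν * TG)) :=
        Finset.sum_congr rfl fun τ _ => Finset.sum_congr rfl fun ν _ => by
          rw [hcontr ν τ]
      have q1 : (∑ τ, ∑ ν, θ τ ν * (((n:ℝ) - 2) * G ν τ x)) = ((n:ℝ) - 2) * TG := by
        rw [hTG, Finset.mul_sum]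
        refine Finset.sum_congr rfl fun τ _ => ?_
        rw [Finset.mul_sum]
        exact Finset.sum_congr rfl fun ν _ => by ring
      have q2 : (∑ τ, ∑ ν, θ τ ν * (-(η τ ν * TG))) = -((n:ℝ) * TG) := by
        have inner : ∀ τ : Fin n, (∑ ν, θ τ ν * (-(η τ ν * TG))) = -TG := by
          intro τ
          have e1 : (∑ ν, θ τ ν * (-(η τ ν * TG))) = (∑ ν, θ τ ν * η ν τ) * (-TG) := by
            rw [Finset.sum_mul]
            exact Finset.sum_congr rfl fun ν _ => by rw [hsym ν τ]; ring
          rw [e1, hθη τ τ, if_pos rfl, one_mul]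
        rw [Finset.sum_congr rfl fun τ _ => inner τ]
        simp [Finset.card_univ, mul_comm]
      rw [q1, q2] at hsum2
      have : (2 * (n:ℝ) - 2) * TG = 0 := by linarith
      have h2n : (2 * (n:ℝ) - 2) ≠ 0 := by
        have : (2:ℝ) < n := by exact_mod_cast hn
        intro hc
        nlinarith
      exact (mul_eq_zero.mp this).resolve_left h2n
    have := hcontr ν τ
    rw [hTG0, mul_zero, neg_zero] at this
    have hn2 : ((n:ℝ) - 2) ≠ 0 := by
      have : (2:ℝ) < n := by exact_mod_cast hn
      intro hc
      nlinarith
    exact (mul_eq_zero.mp this).resolve_left hn2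
  -- g is constant
  have hgconst : ∀ (σ : Fin n) (x : Fin n → ℝ), g σ x = g σ 0 := by
    intro σ
    apply const_of_dirDeriv_zero (g σ) (hgdiff σ)
    intro x τ
    have h0 := hGzero x σ τ
    rw [hG] at h0
    exact h0
  set bt : Fin n → ℝ := fun σ => g σ 0 with hbtd
  set b : Fin n → ℝ := fun ρ => ∑ μ, θ ρ μ * bt μ with hbd
  have hbconst : ∀ μ (x : Fin n → ℝ), g μ x = bt μ := by
    intro μ x
    rw [hgconst μ x, hbtd]
  -- second derivatives are constant
  have hDconst : ∀ (x : Fin n → ℝ) (σ ν ρ : Fin n),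
      D σ ν ρ x = (if ρ = ν then bt σ else 0) + (if ρ = σ then bt ν else 0)
        - η σ ν * b ρ := by
    intro x σ ν ρ
    have hraise : D σ ν ρ x = ∑ μ, θ ρ μ * (∑ ρ', η μ ρ' * D σ ν ρ' x) := by
      have c1 : D σ ν ρ x = ∑ ρ', (if ρ = ρ' then 1 else 0) * D σ ν ρ' x := by
        simp [ite_mul]
      rw [c1]
      have c2 : ∀ ρ' : Fin n, (if ρ = ρ' then (1:ℝ) else 0) * D σ ν ρ' x
          = ∑ μ, (θ ρ μ * η μ ρ') * D σ ν ρ' x := by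
        intro ρ'
        rw [← hθη ρ ρ', Finset.sum_mul]
      rw [Finset.sum_congr rfl fun ρ' _ => c2 ρ', Finset.sum_comm]
      refine Finset.sum_congr rfl fun μ _ => ?_
      rw [Finset.mul_sum]
      exact Finset.sum_congr rfl fun ρ' _ => by ring
    rw [hraise, Finset.sum_congr rfl fun μ _ => by rw [hDval x σ μ ν]]
    have e : ∀ μ : Fin n, θ ρ μ * (η μ ν * g σ x + η μ σ * g ν x - η σ ν * g μ x)
        = (θ ρ μ * η μ ν) * bt σ + ((θ ρ μ * η μ σ) * bt ν - η σ ν * (θ ρ μ * bt μ)) := by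
      intro μ
      rw [hbconst σ x, hbconst ν x, hbconst μ x]
      ring
    rw [Finset.sum_congr rfl fun μ _ => e μ, Finset.sum_add_distrib,
      Finset.sum_sub_distrib, ← Finset.sum_mul, ← Finset.sum_mul, ← Finset.mul_sum,
      hθη ρ ν, hθη ρ σ, hbd]
    simp only [ite_mul, one_mul, zero_mul]
    ring
  -- integrate: first derivatives are affine
  have hPaff : ∀ (τ ρ : Fin n) (x : Fin n → ℝ),
      Pf τ ρ x = Pf τ ρ 0 + ∑ σ, ((if ρ = τ then bt σ else 0) +
        (if ρ = σ then bt τ else 0) - η σ τ * b ρ) * x σ := by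
    intro τ ρ x
    have h := integrate_quadratic (Pf τ ρ) (hPfdiff τ ρ)
      (fun σ => (if ρ = τ then bt σ else 0) + (if ρ = σ then bt τ else 0) - η σ τ * b ρ)
      (0 : Matrix (Fin n) (Fin n) ℝ) ?_ x
    · rw [h]
      simp
    · intro x τ'
      have h1 : fderiv ℝ (Pf τ ρ) x (Pi.single τ' 1) = D τ' τ ρ x := by rw [hD]
      rw [h1, hDconst x τ' τ ρ]
      simp
  -- integrate: the field itself is quadratic
  have hquad : ∀ (ρ : Fin n) (x : Fin n → ℝ),
      ξ x ρ = ξ 0 ρ + (∑ ν', Pf ν' ρ 0 * x ν')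
        + ∑ σ, ∑ ν', ((1:ℝ)/2 * ((if ρ = ν' then bt σ else 0) +
            (if ρ = σ then bt ν' else 0) - η σ ν' * b ρ)) * (x σ * x ν') := by
    intro ρ x
    have h := integrate_quadratic (fun y => ξ y ρ) ((hξc ρ).differentiable (by simp))
      (fun ν' => Pf ν' ρ 0)
      (fun σ ν' => (1:ℝ)/2 * ((if ρ = ν' then bt σ else 0) +
        (if ρ = σ then bt ν' else 0) - η σ ν' * b ρ)) ?_ x
    · exact h
    · intro x τ
      have h1 : fderiv ℝ (fun y => ξ y ρ) x (Pi.single τ 1) = Pf τ ρ x := by rw [hPf]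
      beta_reduce
      rw [h1, hPaff τ ρ x]
      have hsw : ∀ ν' : Fin n, (1:ℝ)/2 * ((if ρ = ν' then bt τ else 0) +
          (if ρ = τ then bt ν' else 0) - η τ ν' * b ρ) * x ν'
          = (1:ℝ)/2 * (((if ρ = τ then bt ν' else 0) +
            (if ρ = ν' then bt τ else 0) - η ν' τ * b ρ) * x ν') := by
        intro ν'
        rw [hsym ν' τ]
        ring
      rw [Finset.sum_congr rfl fun ν' _ => hsw ν', ← Finset.mul_sum]
      have hhalf : ∀ q : Fin n, (1:ℝ)/2 * ((if ρ = τ then bt q else 0) +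
          (if ρ = q then bt τ else 0) - η q τ * b ρ) * x q
          = (1:ℝ)/2 * (((if ρ = τ then bt q else 0) +
            (if ρ = q then bt τ else 0) - η q τ * b ρ) * x q) := fun q => by ring
      rw [Finset.sum_congr rfl fun q _ => hhalf q, ← Finset.mul_sum]
      ring
  -- assemble the result
  refine ⟨ξ 0, fun ρ ν => Pf ν ρ 0 - f 0 * (if ρ = ν then 1 else 0), f 0, b, ?_, ?_⟩
  · intro μ ν
    have h0 := hE 0 μ ν
    have e1 : ∀ μ ν : Fin n, (∑ ρ, η μ ρ * (Pf ν ρ 0 - f 0 * (if ρ = ν then 1 else 0)))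
        = (∑ ρ, η μ ρ * Pf ν ρ 0) - f 0 * η μ ν := by
      intro μ ν
      have e : ∀ ρ : Fin n, η μ ρ * (Pf ν ρ 0 - f 0 * (if ρ = ν then 1 else 0))
          = η μ ρ * Pf ν ρ 0 - (if ρ = ν then f 0 * η μ ρ else 0) := by
        intro ρ
        split <;> ring
      rw [Finset.sum_congr rfl fun ρ _ => e ρ, Finset.sum_sub_distrib,
        Finset.sum_ite_eq' Finset.univ ν (fun ρ => f 0 * η μ ρ)]
      simp
    rw [e1 μ ν, e1 ν μ, hsym ν μ]
    linarith
  · intro x μ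
    rw [hquad μ x]
    have eL : (∑ ν, (Pf ν μ 0 - f 0 * (if μ = ν then 1 else 0)) * x ν)
        = (∑ ν, Pf ν μ 0 * x ν) - f 0 * x μ := by
      have e : ∀ ν : Fin n, (Pf ν μ 0 - f 0 * (if μ = ν then 1 else 0)) * x ν
          = Pf ν μ 0 * x ν - (if ν = μ then f 0 * x ν else 0) := by
        intro ν
        rcases eq_or_ne μ ν with h | h
        · rw [if_pos h, if_pos h.symm]
          ring
        · rw [if_neg h, if_neg h.symm]
          ring
      rw [Finset.sum_congr rfl fun ν _ => e ν, Finset.sum_sub_distrib,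
        Finset.sum_ite_eq' Finset.univ μ (fun ν => f 0 * x ν)]
      simp
    rw [eL]
    have hbtr : ∀ ρ : Fin n, (∑ ν, b ν * η ν ρ) = bt ρ := by
      intro ρ
      have c1 : ∀ ν : Fin n, b ν * η ν ρ = ∑ μ', (η ρ ν * θ ν μ') * bt μ' := by
        intro ν
        rw [hbd, Finset.sum_mul, ← hsym ν ρ]
        exact Finset.sum_congr rfl fun μ' _ => by ring
      rw [Finset.sum_congr rfl fun ν _ => c1 ν, Finset.sum_comm]
      have c2 : ∀ μ' : Fin n, (∑ ν, (η ρ ν * θ ν μ') * bt μ')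
          = (if ρ = μ' then 1 else 0) * bt μ' := by
        intro μ'
        rw [← Finset.sum_mul, hηθ ρ μ']
      rw [Finset.sum_congr rfl fun μ' _ => c2 μ']
      simp [ite_mul]
    have ebx : (∑ ν, ∑ ρ', b ν * η ν ρ' * x ρ') = ∑ ρ', bt ρ' * x ρ' := by
      rw [Finset.sum_comm]
      refine Finset.sum_congr rfl fun ρ' _ => ?_
      rw [← hbtr ρ', Finset.sum_mul]
    rw [ebx]
    -- expand the quadratic double sum
    have e5 : ∀ σ ν' : Fin n,
        ((1:ℝ)/2 * ((if μ = ν' then bt σ else 0) +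
          (if μ = σ then bt ν' else 0) - η σ ν' * b μ)) * (x σ * x ν')
        = (if μ = ν' then (1:ℝ)/2 * (bt σ * (x σ * x ν')) else 0) +
          (if μ = σ then (1:ℝ)/2 * (bt ν' * (x σ * x ν')) else 0) -
          (1:ℝ)/2 * (b μ * (η σ ν' * x σ * x ν')) := by
      intro σ ν'
      split_ifs <;> ring
    rw [Finset.sum_congr rfl fun σ _ => Finset.sum_congr rfl fun ν' _ => e5 σ ν']
    have e6 : ∀ σ : Fin n, (∑ ν', ((if μ = ν' then (1:ℝ)/2 * (bt σ * (x σ * x ν')) else 0) +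
          (if μ = σ then (1:ℝ)/2 * (bt ν' * (x σ * x ν')) else 0) -
          (1:ℝ)/2 * (b μ * (η σ ν' * x σ * x ν'))))
        = (1:ℝ)/2 * (bt σ * (x σ * x μ)) +
          (if μ = σ then ∑ ν', (1:ℝ)/2 * (bt ν' * (x σ * x ν')) else 0) -
          (1:ℝ)/2 * (b μ * ∑ ν', η σ ν' * x σ * x ν') := by
      intro σ
      rw [Finset.sum_sub_distrib, Finset.sum_add_distrib]
      congr 1
      · congr 1
        · rw [Finset.sum_ite_eq Finset.univ μ fun ν' => (1:ℝ)/2 * (bt σ * (x σ * x ν'))]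
          simp
        · split <;> simp
      · rw [Finset.mul_sum, Finset.mul_sum]
    rw [Finset.sum_congr rfl fun σ _ => e6 σ, Finset.sum_sub_distrib,
      Finset.sum_add_distrib,
      Finset.sum_ite_eq Finset.univ μ fun σ => ∑ ν', (1:ℝ)/2 * (bt ν' * (x σ * x ν'))]
    have e7 : (∑ σ, (1:ℝ)/2 * (bt σ * (x σ * x μ)))
        + (∑ ν', (1:ℝ)/2 * (bt ν' * (x μ * x ν')))
        = (∑ ρ', bt ρ' * x ρ') * x μ := by
      rw [← Finset.sum_add_distrib, Finset.sum_mul]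
      exact Finset.sum_congr rfl fun σ _ => by ring
    have e8 : (∑ σ, (1:ℝ)/2 * (b μ * ∑ ν', η σ ν' * x σ * x ν'))
        = (1:ℝ)/2 * b μ * (∑ ν, ∑ ρ', η ν ρ' * x ν * x ρ') := by
      rw [Finset.mul_sum]
      exact Finset.sum_congr rfl fun σ _ => (mul_assoc ((1:ℝ)/2) (b μ) _).symm
    simp only [Finset.mem_univ, if_true]
    rw [e7, e8]
    ring

lemma trace_zero (η : Matrix (Fin n) (Fin n) ℝ) (hηsymm : ηᵀ = η) (hηinv : IsUnit η)
    (l : Matrix (Fin n) (Fin n) ℝ)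
    (hl : ∀ μ ν, (∑ ρ, η μ ρ * l ρ ν) = -(∑ ρ, η ν ρ * l ρ μ)) :
    ∑ ρ, l ρ ρ = 0 := by
  have hL : (η * l)ᵀ = -(η * l) := by
    ext μ ν
    simpa [Matrix.mul_apply, Matrix.transpose_apply] using hl ν μ
  have hdet : IsUnit η.det := (Matrix.isUnit_iff_isUnit_det η).mp hηinv
  have hli : l = η⁻¹ * (η * l) := by
    rw [← Matrix.mul_assoc, Matrix.nonsing_inv_mul η hdet, Matrix.one_mul]
  have hηi : (η⁻¹)ᵀ = η⁻¹ := by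
    rw [Matrix.transpose_nonsing_inv, hηsymm]
  have h1 : (η⁻¹ * (η * l)).trace = -(η⁻¹ * (η * l)).trace := by
    conv_lhs => rw [← Matrix.trace_transpose, Matrix.transpose_mul, hL, hηi]
    rw [Matrix.trace_mul_comm]
    simp [Matrix.mul_neg, Matrix.neg_mul]
  have h2 : (η⁻¹ * (η * l)).trace = 0 := by linarith
  calc ∑ ρ, l ρ ρ = l.trace := by rw [Matrix.trace]; rfl
    _ = 0 := by rw [hli]; exact h2


theorem bwd (n : ℕ) (hn : 2 < n)
    (η : Matrix (Fin n) (Fin n) ℝ) (hηsymm : ηᵀ = η) (hηinv : IsUnit η)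
    (ξ : (Fin n → ℝ) → (Fin n → ℝ))
    (H : ∃ (a : Fin n → ℝ) (l : Matrix (Fin n) (Fin n) ℝ) (c : ℝ) (b : Fin n → ℝ),
        (∀ μ ν, (∑ ρ, η μ ρ * l ρ ν) = -(∑ ρ, η ν ρ * l ρ μ)) ∧
        ∀ (x : Fin n → ℝ) (μ : Fin n),
          ξ x μ = a μ + (∑ ν, l μ ν * x ν) + c * x μ +
            (∑ ν, ∑ ρ, b ν * η ν ρ * x ρ) * x μ -
            (1 / 2) * b μ * (∑ ν, ∑ ρ, η ν ρ * x ν * x ρ)) :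
    (∀ (x : Fin n → ℝ) (μ ν : Fin n),
        (∑ ρ, η μ ρ * fderiv ℝ ξ x (Pi.single ν 1) ρ) +
          (∑ ρ, η ν ρ * fderiv ℝ ξ x (Pi.single μ 1) ρ) =
        (2 / (n : ℝ)) * η μ ν * ∑ ρ, fderiv ℝ ξ x (Pi.single ρ 1) ρ) := by
  obtain ⟨a, l, c, b, hl, hform⟩ := H
  have hsym : ∀ i j, η i j = η j i := by
    intro i j
    exact congrFun (congrFun hηsymm j) i
  -- lowered b
  set bt : Fin n → ℝ := fun σ => ∑ i, b i * η i σ with hbt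
  -- rewrite ξ as a model function in each component
  have hξfun : ξ = fun (y : Fin n → ℝ) (ρ : Fin n) =>
      a ρ + (∑ ν, (l ρ ν + c * (if ρ = ν then 1 else 0)) * y ν) +
        ∑ σ, ∑ ν, ((if ν = ρ then bt σ else 0) - (1/2) * b ρ * η σ ν) * (y σ * y ν) := by
    funext y ρ
    rw [hform y ρ]
    have e1 : ∑ ν, (l ρ ν + c * (if ρ = ν then 1 else 0)) * y ν
        = (∑ ν, l ρ ν * y ν) + c * y ρ := by
      simp [add_mul, Finset.sum_add_distrib, mul_ite, ite_mul, mul_assoc]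
    have e2 : ∑ σ, ∑ ν, ((if ν = ρ then bt σ else 0) - (1/2) * b ρ * η σ ν) * (y σ * y ν)
        = (∑ ν, ∑ ρ', b ν * η ν ρ' * y ρ') * y ρ
          - (1/2) * b ρ * (∑ ν, ∑ σ, η ν σ * y ν * y σ) := by
      have e21 : ∀ σ, ∑ ν, ((if ν = ρ then bt σ else 0) - (1/2) * b ρ * η σ ν) * (y σ * y ν)
          = bt σ * (y σ * y ρ) - ∑ ν, (1/2) * b ρ * η σ ν * (y σ * y ν) := by
        intro σ
        rw [show (fun ν => ((if ν = ρ then bt σ else 0) - (1/2) * b ρ * η σ ν) * (y σ * y ν))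
          = fun ν => ((if ν = ρ then bt σ * (y σ * y ν) else 0)
              - (1/2) * b ρ * η σ ν * (y σ * y ν)) from by funext ν; split <;> ring]
        rw [Finset.sum_sub_distrib]
        simp
      rw [Finset.sum_congr rfl (fun σ _ => e21 σ), Finset.sum_sub_distrib]
      congr 1
      · rw [Finset.sum_mul]
        calc ∑ σ, bt σ * (y σ * y ρ)
            = ∑ σ, ∑ i, b i * η i σ * (y σ * y ρ) :=
              Finset.sum_congr rfl fun σ _ => by simp only [hbt, Finset.sum_mul]
          _ = ∑ i, ∑ σ, b i * η i σ * (y σ * y ρ) := Finset.sum_comm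
          _ = ∑ i, (∑ ρ', b i * η i ρ' * y ρ') * y ρ := Finset.sum_congr rfl fun i _ => by
              rw [Finset.sum_mul]
              exact Finset.sum_congr rfl fun σ _ => by ring
      · rw [Finset.mul_sum]
        apply Finset.sum_congr rfl
        intro σ _
        rw [Finset.mul_sum]
        apply Finset.sum_congr rfl
        intro ν _
        ring
    rw [e1, e2]
    ring
  subst hξfun
  -- differentiability
  have hdiff : Differentiable ℝ (fun (y : Fin n → ℝ) (ρ : Fin n) =>
      a ρ + (∑ ν, (l ρ ν + c * (if ρ = ν then 1 else 0)) * y ν) +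
        ∑ σ, ∑ ν, ((if ν = ρ then bt σ else 0) - (1/2) * b ρ * η σ ν) * (y σ * y ν)) := by
    apply differentiable_pi.mpr
    intro ρ
    exact model_differentiable (a ρ) _ _
  -- the directional derivatives
  have hP : ∀ (x : Fin n → ℝ) (τ ρ : Fin n),
      fderiv ℝ (fun (y : Fin n → ℝ) (ρ : Fin n) =>
        a ρ + (∑ ν, (l ρ ν + c * (if ρ = ν then 1 else 0)) * y ν) +
          ∑ σ, ∑ ν, ((if ν = ρ then bt σ else 0) - (1/2) * b ρ * η σ ν) * (y σ * y ν))
        x (Pi.single τ 1) ρ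
      = l ρ τ + c * (if ρ = τ then 1 else 0) + bt τ * x ρ
        + (if τ = ρ then 1 else 0) * (∑ σ, bt σ * x σ)
        - b ρ * (∑ σ, η τ σ * x σ) := by
    intro x τ ρ
    rw [fderiv_component' _ hdiff]
    have hme := model_fderiv_eval (a ρ) (fun ν => l ρ ν + c * (if ρ = ν then 1 else 0))
      (fun σ ν => (if ν = ρ then bt σ else 0) - (1/2) * b ρ * η σ ν) x τ
    beta_reduce at hme
    rw [hme]
    have e3 : ∑ ν, ((if ν = ρ then bt τ else 0) - (1/2) * b ρ * η τ ν) * x ν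
        = bt τ * x ρ - (1/2) * b ρ * (∑ ν, η τ ν * x ν) := by
      rw [show (fun ν => ((if ν = ρ then bt τ else 0) - (1/2) * b ρ * η τ ν) * x ν)
        = fun ν => ((if ν = ρ then bt τ * x ν else 0) - (1/2) * b ρ * (η τ ν * x ν)) from by
          funext ν; split <;> ring]
      rw [Finset.sum_sub_distrib, Finset.mul_sum]
      simp
    have e4 : ∑ σ, ((if τ = ρ then bt σ else 0) - (1/2) * b ρ * η σ τ) * x σ
        = (if τ = ρ then 1 else 0) * (∑ σ, bt σ * x σ)
          - (1/2) * b ρ * (∑ σ, η τ σ * x σ) := by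
      rw [show (fun σ => ((if τ = ρ then bt σ else 0) - (1/2) * b ρ * η σ τ) * x σ)
        = fun σ => ((if τ = ρ then bt σ * x σ else 0) - (1/2) * b ρ * (η τ σ * x σ)) from by
          funext σ; rw [hsym σ τ]; split <;> ring]
      rw [Finset.sum_sub_distrib, Finset.mul_sum]
      by_cases hτρ : τ = ρ <;> simp [hτρ, Finset.mul_sum]
    rw [e3, e4]
    ring
  intro x μ ν
  simp only [hP, if_pos, eq_self_iff_true, if_true]
  set w := ∑ σ, bt σ * x σ with hw
  set u : (Fin n → ℝ) := fun τ => ∑ σ, η τ σ * x σ with hu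
  have hbη : ∀ μ, (∑ ρ, η μ ρ * b ρ) = bt μ := by
    intro μ
    rw [hbt]
    exact Finset.sum_congr rfl fun ρ _ => by rw [hsym μ ρ]; ring
  have hA : ∀ μ ν : Fin n,
      (∑ ρ, η μ ρ * ((l ρ ν + c * if ρ = ν then 1 else 0) + bt ν * x ρ +
          (if ν = ρ then 1 else 0) * w - b ρ * u ν))
        = (∑ ρ, η μ ρ * l ρ ν) + c * η μ ν + bt ν * u μ + η μ ν * w - bt μ * u ν := by
    intro μ ν
    have expand : ∀ ρ : Fin n, η μ ρ * ((l ρ ν + c * if ρ = ν then 1 else 0) + bt ν * x ρ +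
          (if ν = ρ then 1 else 0) * w - b ρ * u ν)
        = η μ ρ * l ρ ν + ((if ρ = ν then c * η μ ρ else 0) +
            (bt ν * (η μ ρ * x ρ) + ((if ρ = ν then w * η μ ρ else 0) -
            (η μ ρ * b ρ) * u ν))) := by
      intro ρ
      by_cases h : ρ = ν
      · simp only [h, if_pos, eq_self_iff_true, if_true]
        ring
      · simp only [if_neg h, if_neg (fun hh : ν = ρ => h hh.symm)]
        ring
    rw [Finset.sum_congr rfl fun ρ _ => expand ρ]
    rw [Finset.sum_add_distrib, Finset.sum_add_distrib, Finset.sum_add_distrib,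
        Finset.sum_sub_distrib]
    rw [Finset.sum_ite_eq' Finset.univ ν (fun ρ => c * η μ ρ),
        Finset.sum_ite_eq' Finset.univ ν (fun ρ => w * η μ ρ)]
    rw [← Finset.mul_sum, ← Finset.sum_mul, hbη μ]
    simp only [Finset.mem_univ, if_true]
    rw [hu]
    ring
  have hT : (∑ ρ : Fin n, ((l ρ ρ + c * 1) + bt ρ * x ρ + 1 * w - b ρ * u ρ))
      = (∑ ρ, l ρ ρ) + n * c + w + n * w - w := by
    have eT : ∑ ρ : Fin n, b ρ * u ρ = w := by
      rw [hw]
      calc ∑ ρ, b ρ * u ρ = ∑ ρ, ∑ σ, b ρ * (η ρ σ * x σ) := by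
            exact Finset.sum_congr rfl fun ρ _ => by rw [hu]; exact Finset.mul_sum _ _ _
        _ = ∑ σ, ∑ ρ, b ρ * (η ρ σ * x σ) := Finset.sum_comm
        _ = ∑ σ, bt σ * x σ := Finset.sum_congr rfl fun σ _ => by
            rw [hbt, Finset.sum_mul]
            exact Finset.sum_congr rfl fun ρ _ => by ring
    rw [Finset.sum_sub_distrib, Finset.sum_add_distrib, Finset.sum_add_distrib,
        Finset.sum_add_distrib, eT]
    simp [Finset.sum_const, Finset.card_univ, mul_comm]
    rw [hw]
    exact Finset.sum_congr rfl fun σ _ => mul_comm _ _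
  rw [hA μ ν, hA ν μ, hT, trace_zero η hηsymm hηinv l hl, hsym ν μ, hl μ ν]
  have hn0 : (n : ℝ) ≠ 0 := Nat.cast_ne_zero.mpr (by omega)
  field_simp
  ring


/-- For `n > 2` and a constant invertible symmetric `η`, a smooth vector
field `ξ` on `ℝⁿ` satisfies the conformal Killing equation
`η_{μρ} ∂_ν ξ^ρ + η_{νρ} ∂_μ ξ^ρ = (2/n) η_{μν} ∂_ρ ξ^ρ` iff it is of the form
`ξ^μ(x) = a^μ + λ^μ_ν x^ν + c x^μ + (b·x) x^μ - (1/2) b^μ (x·x)` with `λ_{μν}`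
antisymmetric (translations, Lorentz transformations, dilatations and special conformal
transformations). -/
theorem stmt_12 (n : ℕ) (hn : 2 < n)
    (η : Matrix (Fin n) (Fin n) ℝ) (hηsymm : ηᵀ = η) (hηinv : IsUnit η)
    (ξ : (Fin n → ℝ) → (Fin n → ℝ)) (hξ : ContDiff ℝ (⊤ : ℕ∞) ξ) :
    (∀ (x : Fin n → ℝ) (μ ν : Fin n),
        (∑ ρ, η μ ρ * fderiv ℝ ξ x (Pi.single ν 1) ρ) +
          (∑ ρ, η ν ρ * fderiv ℝ ξ x (Pi.single μ 1) ρ) =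
        (2 / (n : ℝ)) * η μ ν * ∑ ρ, fderiv ℝ ξ x (Pi.single ρ 1) ρ) ↔
    (∃ (a : Fin n → ℝ) (l : Matrix (Fin n) (Fin n) ℝ) (c : ℝ) (b : Fin n → ℝ),
        (∀ μ ν, (∑ ρ, η μ ρ * l ρ ν) = -(∑ ρ, η ν ρ * l ρ μ)) ∧
        ∀ (x : Fin n → ℝ) (μ : Fin n),
          ξ x μ = a μ + (∑ ν, l μ ν * x ν) + c * x μ +
            (∑ ν, ∑ ρ, b ν * η ν ρ * x ρ) * x μ -
            (1 / 2) * b μ * (∑ ν, ∑ ρ, η ν ρ * x ν * x ρ)) := by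
  constructor
  · exact fwd n hn η hηsymm hηinv ξ hξ
  · exact bwd n hn η hηsymm hηinv ξ
end

section
/- Let n > 2, let η = (η_{μν}) be a constant invertible symmetric real n×n matrix, and let θ = (θ^{μν}) be a constant invertible antisymmetric real n×n matrix. A smooth conformal Killing vector field ξ : ℝⁿ → ℝⁿ for η satisfies θ^{ασ} ∂_σ ξ^β(x) + θ^{σβ} ∂_σ ξ^α(x) = 0 for all x and all α, β if and only if ξ is affine of the form ξ^μ(x) = a^μ + λ^μ_ν x^ν with constant a^μ and constant matrix λ^μ_ν satisfying η^{μρ} λ^ν_ρ + η^{ρν} λ^μ_ρ = 0 and θ^{μρ} λ^ν_ρ + θ^{ρν} λ^μ_ρ = 0, where η^{μν} denotes the inverse matrix of η_{μν}. In particular, any such ξ has vanishing divergence, ∂_μ ξ^μ = 0, so no dilatation or special conformal part occurs. -/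
open Matrix

/-- For `n > 2`, constant invertible symmetric `η` and constant invertible
antisymmetric `θ`, a smooth conformal Killing vector field `ξ` for `η` preserves `θ`
(`θ^{ασ} ∂_σ ξ^β + θ^{σβ} ∂_σ ξ^α = 0`) iff `ξ` is affine, `ξ^μ(x) = a^μ + λ^μ_ν x^ν`,
with `η^{μρ} λ^ν_ρ + η^{ρν} λ^μ_ρ = 0` and `θ^{μρ} λ^ν_ρ + θ^{ρν} λ^μ_ρ = 0`.
In particular any such `ξ` is divergence free, so no dilatation or special conformal part
occurs. -/
theorem stmt_13 (n : ℕ) (hn : 2 < n)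
    (η : Matrix (Fin n) (Fin n) ℝ) (hηsymm : ηᵀ = η) (hηinv : IsUnit η)
    (θ : Matrix (Fin n) (Fin n) ℝ) (hθanti : θᵀ = -θ) (hθinv : IsUnit θ)
    (ξ : (Fin n → ℝ) → (Fin n → ℝ)) (hξ : ContDiff ℝ (⊤ : ℕ∞) ξ)
    (hck : ∀ (x : Fin n → ℝ) (μ ν : Fin n),
      (∑ ρ, η μ ρ * fderiv ℝ ξ x (Pi.single ν 1) ρ) +
        (∑ ρ, η ν ρ * fderiv ℝ ξ x (Pi.single μ 1) ρ) =
      (2 / (n : ℝ)) * η μ ν * ∑ ρ, fderiv ℝ ξ x (Pi.single ρ 1) ρ) :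
    ((∀ (x : Fin n → ℝ) (α β : Fin n),
        (∑ σ, θ α σ * fderiv ℝ ξ x (Pi.single σ 1) β) +
          (∑ σ, θ σ β * fderiv ℝ ξ x (Pi.single σ 1) α) = 0) ↔
      (∃ (a : Fin n → ℝ) (l : Matrix (Fin n) (Fin n) ℝ),
        (∀ μ ν, (∑ ρ, η⁻¹ μ ρ * l ν ρ) + (∑ ρ, η⁻¹ ρ ν * l μ ρ) = 0) ∧
        (∀ μ ν, (∑ ρ, θ μ ρ * l ν ρ) + (∑ ρ, θ ρ ν * l μ ρ) = 0) ∧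
        (∀ (x : Fin n → ℝ) (μ : Fin n), ξ x μ = a μ + ∑ ν, l μ ν * x ν))) ∧
    ((∀ (x : Fin n → ℝ) (α β : Fin n),
        (∑ σ, θ α σ * fderiv ℝ ξ x (Pi.single σ 1) β) +
          (∑ σ, θ σ β * fderiv ℝ ξ x (Pi.single σ 1) α) = 0) →
      ∀ x : Fin n → ℝ, (∑ μ, fderiv ℝ ξ x (Pi.single μ 1) μ) = 0) := by
  classical
  have hηdet : IsUnit η.det := (Matrix.isUnit_iff_isUnit_det η).mp hηinv
  have hθdet : IsUnit θ.det := (Matrix.isUnit_iff_isUnit_det θ).mp hθinv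
  -- Part 2 : trace vanishes pointwise from the θ-condition
  have trace0 : (∀ (x : Fin n → ℝ) (α β : Fin n),
        (∑ σ, θ α σ * fderiv ℝ ξ x (Pi.single σ 1) β) +
          (∑ σ, θ σ β * fderiv ℝ ξ x (Pi.single σ 1) α) = 0) →
      ∀ x : Fin n → ℝ, (∑ μ, fderiv ℝ ξ x (Pi.single μ 1) μ) = 0 := by
    intro h x
    set J : Matrix (Fin n) (Fin n) ℝ :=
      Matrix.of (fun ρ ν => fderiv ℝ ξ x (Pi.single ν 1) ρ) with hJ
    have hmat : θ * Jᵀ + J * θ = 0 := by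
      ext α β
      have h2 := h x α β
      simp only [Matrix.add_apply, Matrix.mul_apply, Matrix.transpose_apply, hJ,
        Matrix.of_apply, Matrix.zero_apply]
      rw [← h2]
      congr 1
      exact Finset.sum_congr rfl fun σ _ => by ring
    have h1 : θ * Jᵀ = -(J * θ) := by rw [← eq_neg_iff_add_eq_zero] at hmat; exact hmat
    have h2 : Jᵀ = -(θ⁻¹ * (J * θ)) := by
      rw [← Matrix.mul_neg, ← h1, ← Matrix.mul_assoc, Matrix.nonsing_inv_mul θ hθdet,
        Matrix.one_mul]
    have h3 : J.trace = Jᵀ.trace := (Matrix.trace_transpose J).symm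
    have h4 : (θ⁻¹ * (J * θ)).trace = J.trace := by
      rw [← Matrix.mul_assoc, Matrix.trace_mul_cycle,
        Matrix.mul_nonsing_inv θ hθdet, Matrix.one_mul]
    rw [h2, Matrix.trace_neg, h4] at h3
    have h5 : J.trace = 0 := by linarith
    simpa [Matrix.trace, Matrix.diag, hJ] using h5
  refine ⟨⟨?_, ?_⟩, trace0⟩
  · -- forward direction
    intro hθc
    have hξdiff : Differentiable ℝ ξ := hξ.differentiable (by simp)
    have hFdiff : Differentiable ℝ (fderiv ℝ ξ) :=
      (hξ.fderiv_right (m := 1) (by exact WithTop.coe_le_coe.mpr le_top)).differentiable (by simp)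
    have hsymm : ∀ (x v w : Fin n → ℝ),
        fderiv ℝ (fderiv ℝ ξ) x v w = fderiv ℝ (fderiv ℝ ξ) x w v :=
      fun x v w => second_derivative_symmetric (fun y => (hξdiff y).hasFDerivAt)
        ((hFdiff x).hasFDerivAt) v w
    have hDhas : ∀ (x : Fin n → ℝ) (ν ρ : Fin n),
        HasFDerivAt (fun y => fderiv ℝ ξ y (Pi.single ν 1) ρ)
          (((ContinuousLinearMap.proj ρ).comp
            (ContinuousLinearMap.apply ℝ (Fin n → ℝ) (Pi.single ν 1))).comp
            (fderiv ℝ (fderiv ℝ ξ) x)) x := by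
      intro x ν ρ
      exact (((ContinuousLinearMap.proj ρ).comp
        (ContinuousLinearMap.apply ℝ (Fin n → ℝ) (Pi.single ν 1))).hasFDerivAt).comp x
        ((hFdiff x).hasFDerivAt)
    -- Killing equation
    have hkill : ∀ (x : Fin n → ℝ) (μ ν : Fin n),
        (∑ ρ, η μ ρ * fderiv ℝ ξ x (Pi.single ν 1) ρ) +
          (∑ ρ, η ν ρ * fderiv ℝ ξ x (Pi.single μ 1) ρ) = 0 := by
      intro x μ ν
      have h := hck x μ ν
      rw [trace0 hθc x] at h
      simpa using h
    -- differentiated Killing equation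
    have hkill' : ∀ (x : Fin n → ℝ) (lam μ ν : Fin n),
        (∑ ρ, η μ ρ * fderiv ℝ (fderiv ℝ ξ) x (Pi.single lam 1) (Pi.single ν 1) ρ) +
          (∑ ρ, η ν ρ * fderiv ℝ (fderiv ℝ ξ) x (Pi.single lam 1) (Pi.single μ 1) ρ) = 0 := by
      intro x lam μ ν
      have hG : HasFDerivAt
          (fun y => (∑ ρ, η μ ρ * fderiv ℝ ξ y (Pi.single ν 1) ρ) +
            (∑ ρ, η ν ρ * fderiv ℝ ξ y (Pi.single μ 1) ρ))
          ((∑ ρ, η μ ρ • (((ContinuousLinearMap.proj ρ).comp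
             (ContinuousLinearMap.apply ℝ (Fin n → ℝ) (Pi.single ν 1))).comp
             (fderiv ℝ (fderiv ℝ ξ) x))) +
           (∑ ρ, η ν ρ • (((ContinuousLinearMap.proj ρ).comp
             (ContinuousLinearMap.apply ℝ (Fin n → ℝ) (Pi.single μ 1))).comp
             (fderiv ℝ (fderiv ℝ ξ) x)))) x := by
        exact (HasFDerivAt.fun_sum (fun ρ _ => (hDhas x ν ρ).const_mul (η μ ρ))).add
          (HasFDerivAt.fun_sum (fun ρ _ => (hDhas x μ ρ).const_mul (η ν ρ)))
      have hzero : HasFDerivAt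
          (fun y => (∑ ρ, η μ ρ * fderiv ℝ ξ y (Pi.single ν 1) ρ) +
            (∑ ρ, η ν ρ * fderiv ℝ ξ y (Pi.single μ 1) ρ)) (0 : (Fin n → ℝ) →L[ℝ] ℝ) x := by
        have : (fun y => (∑ ρ, η μ ρ * fderiv ℝ ξ y (Pi.single ν 1) ρ) +
            (∑ ρ, η ν ρ * fderiv ℝ ξ y (Pi.single μ 1) ρ)) = fun _ => (0 : ℝ) :=
          funext fun y => hkill y μ ν
        rw [this]
        exact hasFDerivAt_const 0 x
      have he := hG.unique hzero
      have := congrArg (fun (T : (Fin n → ℝ) →L[ℝ] ℝ) => T (Pi.single lam 1)) he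
      simpa [ContinuousLinearMap.sum_apply, ContinuousLinearMap.smul_apply,
        ContinuousLinearMap.comp_apply, smul_eq_mul] using this
    -- the standard 3-index trick : all second derivatives vanish
    have hA0 : ∀ (x : Fin n → ℝ) (lam ν ρ : Fin n),
        fderiv ℝ (fderiv ℝ ξ) x (Pi.single lam 1) (Pi.single ν 1) ρ = 0 := by
      intro x lam ν ρ
      set S : Fin n → Fin n → Fin n → ℝ := fun lam μ ν =>
        ∑ ρ, η μ ρ * fderiv ℝ (fderiv ℝ ξ) x (Pi.single lam 1) (Pi.single ν 1) ρ with hS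
      have h1 : ∀ lam μ ν, S lam μ ν + S lam ν μ = 0 := fun lam μ ν => hkill' x lam μ ν
      have h2 : ∀ lam μ ν, S lam μ ν = S ν μ lam := by
        intro lam μ ν
        simp only [hS]
        exact Finset.sum_congr rfl fun ρ _ => by rw [hsymm x (Pi.single lam 1) (Pi.single ν 1)]
      have h3 : ∀ lam μ ν, S lam μ ν = 0 := by
        intro lam μ ν
        have e1 : S lam μ ν = -S lam ν μ := by linarith [h1 lam μ ν]
        have e2 : S lam ν μ = S μ ν lam := h2 lam ν μ
        have e3 : S μ ν lam = -S μ lam ν := by linarith [h1 μ ν lam]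
        have e4 : S μ lam ν = S ν lam μ := h2 μ lam ν
        have e5 : S ν lam μ = -S ν μ lam := by linarith [h1 ν lam μ]
        have e6 : S ν μ lam = S lam μ ν := h2 ν μ lam
        linarith
      -- invert η
      have hv : η *ᵥ (fun ρ => fderiv ℝ (fderiv ℝ ξ) x (Pi.single lam 1) (Pi.single ν 1) ρ) = 0 := by
        funext μ
        have := h3 lam μ ν
        simpa [Matrix.mulVec, dotProduct, hS] using this
      have hv2 : (fun ρ => fderiv ℝ (fderiv ℝ ξ) x (Pi.single lam 1) (Pi.single ν 1) ρ)
          = (0 : Fin n → ℝ) := by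
        have := congrArg (fun w => η⁻¹ *ᵥ w) hv
        simpa [Matrix.mulVec_mulVec, Matrix.nonsing_inv_mul η hηdet] using this
      exact congrFun hv2 ρ
    have hbasis : ∀ v : Fin n → ℝ, v = ∑ i, v i • (Pi.single i 1 : Fin n → ℝ) := by
      intro v
      funext j
      simp [Finset.sum_apply, Pi.single_apply]
    have hA0' : ∀ (y v : Fin n → ℝ) (ν ρ : Fin n),
        fderiv ℝ (fderiv ℝ ξ) y v (Pi.single ν 1) ρ = 0 := by
      intro y v ν ρ
      conv_lhs => rw [hbasis v]
      rw [map_sum, ContinuousLinearMap.sum_apply, Finset.sum_apply]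
      refine Finset.sum_eq_zero fun i _ => ?_
      rw [_root_.map_smul]
      simp [hA0 y i ν ρ]
    -- the first derivatives are constant
    have hDconst : ∀ (x : Fin n → ℝ) (ν ρ : Fin n),
        fderiv ℝ ξ x (Pi.single ν 1) ρ = fderiv ℝ ξ 0 (Pi.single ν 1) ρ := by
      intro x ν ρ
      refine is_const_of_fderiv_eq_zero (fun y => ((hDhas y ν ρ).differentiableAt)) ?_ x 0
      intro y
      rw [(hDhas y ν ρ).fderiv]
      ext v
      exact hA0' y v ν ρ
    set l : Matrix (Fin n) (Fin n) ℝ :=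
      Matrix.of (fun μ ν => fderiv ℝ ξ 0 (Pi.single ν 1) μ) with hl
    -- affine form
    have haffine : ∀ (x : Fin n → ℝ) (μ : Fin n), ξ x μ = ξ 0 μ + ∑ ν, l μ ν * x ν := by
      intro x μ
      set c : (Fin n → ℝ) →L[ℝ] ℝ := ∑ ν, l μ ν • ContinuousLinearMap.proj ν with hc
      have hcval : ∀ v : Fin n → ℝ, c v = ∑ ν, l μ ν * v ν := by
        intro v
        simp [hc, ContinuousLinearMap.sum_apply, ContinuousLinearMap.smul_apply, smul_eq_mul]
      have hhas : ∀ y : Fin n → ℝ, HasFDerivAt (fun z => ξ z μ - c z)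
          (((ContinuousLinearMap.proj μ).comp (fderiv ℝ ξ y)) - c) y := by
        intro y
        exact (((ContinuousLinearMap.proj μ).hasFDerivAt).comp y (hξdiff y).hasFDerivAt).sub
          (c.hasFDerivAt)
      have hfz : ∀ y : Fin n → ℝ,
          (((ContinuousLinearMap.proj μ).comp (fderiv ℝ ξ y)) - c) = 0 := by
        intro y
        ext v
        have h1 : fderiv ℝ ξ y v μ = ∑ i, v i * l μ i := by
          conv_lhs => rw [hbasis v]
          rw [map_sum, Finset.sum_apply]
          refine Finset.sum_congr rfl fun i _ => ?_
          rw [_root_.map_smul]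
          rw [Pi.smul_apply, smul_eq_mul, hDconst y i μ]
          rfl
        simp only [ContinuousLinearMap.sub_apply, ContinuousLinearMap.comp_apply,
          ContinuousLinearMap.proj_apply, ContinuousLinearMap.zero_apply]
        rw [hcval v]
        rw [h1]
        rw [sub_eq_zero]
        exact Finset.sum_congr rfl fun i _ => by ring
      have hconst : ξ x μ - c x = ξ 0 μ - c 0 := by
        refine is_const_of_fderiv_eq_zero (fun y => (hhas y).differentiableAt) ?_ x 0
        intro y
        rw [(hhas y).fderiv, hfz y]
      have hc0 : c 0 = 0 := by simp [hcval]
      have hcx : c x = ∑ ν, l μ ν * x ν := hcval x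
      rw [hc0] at hconst
      rw [← hcx]
      linarith
    refine ⟨ξ 0, l, ?_, ?_, haffine⟩
    · -- η-condition on l
      have hηs : ∀ i j, η i j = η j i := by
        intro i j
        have h := congrFun (congrFun hηsymm i) j
        rw [Matrix.transpose_apply] at h
        exact h.symm
      have hkillmat : η * l + lᵀ * η = 0 := by
        ext μ ν
        have h := hkill 0 μ ν
        simp only [Matrix.add_apply, Matrix.mul_apply, Matrix.transpose_apply, hl,
          Matrix.of_apply, Matrix.zero_apply]
        rw [← h]
        congr 1
        exact Finset.sum_congr rfl fun ρ _ => by rw [hηs ρ ν]; ring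
      have h1 : η * l = -(lᵀ * η) := by rw [← eq_neg_iff_add_eq_zero] at hkillmat; exact hkillmat
      have h2 : η⁻¹ * lᵀ + l * η⁻¹ = 0 := by
        have h3 : l = -(η⁻¹ * lᵀ * η) := by
          rw [Matrix.mul_assoc, ← Matrix.mul_neg, ← h1, ← Matrix.mul_assoc,
            Matrix.nonsing_inv_mul η hηdet, Matrix.one_mul]
        calc η⁻¹ * lᵀ + l * η⁻¹
            = η⁻¹ * lᵀ + (-(η⁻¹ * lᵀ * η)) * η⁻¹ := by rw [← h3]
          _ = 0 := by
              rw [Matrix.neg_mul, Matrix.mul_assoc, Matrix.mul_assoc,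
                Matrix.mul_nonsing_inv η hηdet, Matrix.mul_one]
              exact add_neg_cancel _
      intro μ ν
      have hηinvsymm : ∀ i j, η⁻¹ i j = η⁻¹ j i := by
        intro i j
        have ht : η⁻¹ᵀ = η⁻¹ := by rw [Matrix.transpose_nonsing_inv, hηsymm]
        have h := congrFun (congrFun ht i) j
        rw [Matrix.transpose_apply] at h
        exact h.symm
      calc (∑ ρ, η⁻¹ μ ρ * l ν ρ) + ∑ ρ, η⁻¹ ρ ν * l μ ρ
          = (η⁻¹ * lᵀ + l * η⁻¹) μ ν := by
            simp only [Matrix.add_apply, Matrix.mul_apply, Matrix.transpose_apply]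
            congr 1
            exact Finset.sum_congr rfl fun ρ _ => by rw [hηinvsymm ρ ν]; ring
        _ = 0 := by rw [h2]; simp
    · -- θ-condition on l
      intro μ ν
      have h := hθc 0 μ ν
      calc (∑ ρ, θ μ ρ * l ν ρ) + ∑ ρ, θ ρ ν * l μ ρ
          = (∑ σ, θ μ σ * fderiv ℝ ξ 0 (Pi.single σ 1) ν) +
              ∑ σ, θ σ ν * fderiv ℝ ξ 0 (Pi.single σ 1) μ := rfl
        _ = 0 := h
  · -- reverse direction
    rintro ⟨a, l, _, hl2, haff⟩ x α β
    have hξeq : ξ = fun y => a + l *ᵥ y := by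
      funext y μ
      rw [haff y μ]
      simp [Matrix.mulVec, dotProduct]
    have hc : HasFDerivAt ξ
        (LinearMap.toContinuousLinearMap (Matrix.mulVecLin l)) x := by
      rw [hξeq]
      have : HasFDerivAt (fun y : Fin n → ℝ => l *ᵥ y)
          (LinearMap.toContinuousLinearMap (Matrix.mulVecLin l)) x :=
        (LinearMap.toContinuousLinearMap (Matrix.mulVecLin l)).hasFDerivAt
      exact this.const_add a
    have hf : ∀ σ ρ, fderiv ℝ ξ x (Pi.single σ 1) ρ = l ρ σ := by
      intro σ ρ
      rw [hc.fderiv]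
      simp [Matrix.mulVec_single]
    simp only [hf]
    exact hl2 α β
end

section
/- Let η be a block-diagonal invertible symmetric real n×n matrix η = diag(η₁, η₂) with η₁ a symmetric invertible k×k block and η₂ a symmetric invertible m×m block (k + m = n), and let θ = diag(0, θ₂) be the block-diagonal antisymmetric n×n matrix whose only nonzero block is an invertible antisymmetric m×m matrix θ₂. Then every real n×n matrix λ satisfying λ η + η λᵀ = 0 and λ θ + θ λᵀ = 0 is block diagonal, λ = diag(λ₁, λ₂), with λ₁ η₁ + η₁ λ₁ᵀ = 0 and λ₂ η₂ + η₂ λ₂ᵀ = 0, λ₂ θ₂ + θ₂ λ₂ᵀ = 0. Consequently the Lie algebra of all such λ (with commutator bracket) is isomorphic to the direct sum of the Lie algebra {λ₁ : λ₁ η₁ + η₁ λ₁ᵀ = 0} and the Lie algebra {λ₂ : λ₂ η₂ + η₂ λ₂ᵀ = 0 and λ₂ θ₂ + θ₂ λ₂ᵀ = 0}. -/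
open Matrix

attribute [local instance 100] LieRing.ofAssociativeRing

/-!
Write `λ` in blocks `(a b; c d)`. The `(1,2)` block of `λ θ + θ λᵀ` is `b θ₂`, so `b = 0` since
`θ₂` is invertible; the `(1,2)` block of `λ η + η λᵀ` is then `η₁ cᵀ`, so `c = 0` since `η₁` is
invertible. On block-diagonal matrices both conditions split into the conditions on the blocks,
and `(B, C) ↦ diag(B, C)` is an injective Lie algebra homomorphism, whose restriction to
`g₁ × g₂` therefore has image exactly `g`.
-/

namespace Matrix

lemma IsTwoBlockDiagonal.eq_fromBlocks {α n o : Type*} [Zero α] {A : Matrix (n ⊕ o) (n ⊕ o) α}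
    (hA : A.IsTwoBlockDiagonal) : A = fromBlocks A.toBlocks₁₁ 0 0 A.toBlocks₂₂ := by
  rw [← hA.1, ← hA.2, fromBlocks_toBlocks]

variable {R l n o : Type*} [CommRing R] [Fintype n] [Fintype o]

lemma eq_zero_of_mul_eq_zero_of_isUnit [DecidableEq o] {B : Matrix l o R}
    {U : Matrix o o R} (hU : IsUnit U) (h : B * U = 0) : B = 0 := by
  have := hU.nonempty_invertible.some
  exact mul_left_injective_of_invertible U (by simpa using h)

lemma fromBlocks_mul_add_mul_transpose (a : Matrix n n R) (b : Matrix n o R)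
    (c : Matrix o n R) (d : Matrix o o R) (J₁ : Matrix n n R) (J₂ : Matrix o o R) :
    fromBlocks a b c d * fromBlocks J₁ 0 0 J₂ + fromBlocks J₁ 0 0 J₂ * (fromBlocks a b c d)ᵀ =
      fromBlocks (a * J₁ + J₁ * aᵀ) (b * J₂ + J₁ * cᵀ) (c * J₁ + J₂ * bᵀ)
        (d * J₂ + J₂ * dᵀ) := by
  simp [fromBlocks_multiply, fromBlocks_transpose, fromBlocks_add]

lemma fromBlocks_diag_mul_add_mul_transpose_eq_zero_iff (B J₁ : Matrix n n R)
    (C J₂ : Matrix o o R) :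
    fromBlocks B 0 0 C * fromBlocks J₁ 0 0 J₂ + fromBlocks J₁ 0 0 J₂ * (fromBlocks B 0 0 C)ᵀ = 0 ↔
      B * J₁ + J₁ * Bᵀ = 0 ∧ C * J₂ + J₂ * Cᵀ = 0 := by
  rw [fromBlocks_mul_add_mul_transpose, ← fromBlocks_zero, fromBlocks_inj]
  simp

lemma isTwoBlockDiagonal_of_mul_add_mul_transpose_eq_zero [DecidableEq n] [DecidableEq o]
    {A : Matrix (n ⊕ o) (n ⊕ o) R} {η₁ : Matrix n n R} {η₂ θ₂ : Matrix o o R}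
    (hη₁ : IsUnit η₁) (hθ₂ : IsUnit θ₂)
    (hη : A * fromBlocks η₁ 0 0 η₂ + fromBlocks η₁ 0 0 η₂ * Aᵀ = 0)
    (hθ : A * fromBlocks 0 0 0 θ₂ + fromBlocks 0 0 0 θ₂ * Aᵀ = 0) :
    A.IsTwoBlockDiagonal := by
  rw [← fromBlocks_toBlocks A, fromBlocks_mul_add_mul_transpose, ← fromBlocks_zero,
    fromBlocks_inj] at hη hθ
  have hb : A.toBlocks₁₂ = 0 := eq_zero_of_mul_eq_zero_of_isUnit hθ₂ (by simpa using hθ.2.1)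
  have hc : A.toBlocks₂₁ * η₁ᵀ = 0 := by
    rw [← transpose_transpose A.toBlocks₂₁, ← transpose_mul]
    simpa [hb] using congrArg transpose hη.2.1
  exact ⟨hb, eq_zero_of_mul_eq_zero_of_isUnit ((isUnit_transpose _).2 hη₁) hc⟩

variable (R n o) [DecidableEq n] [DecidableEq o]

def fromBlocksDiagLieHom : Matrix n n R × Matrix o o R →ₗ⁅R⁆ Matrix (n ⊕ o) (n ⊕ o) R where
  toFun p := fromBlocks p.1 0 0 p.2
  map_add' p q := by simp [fromBlocks_add]
  map_smul' r p := by simp [fromBlocks_smul]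
  map_lie' {p q} := by
    simp [Ring.lie_def, fromBlocks_multiply, sub_eq_add_neg, fromBlocks_neg, fromBlocks_add]

lemma fromBlocksDiagLieHom_injective : Function.Injective (fromBlocksDiagLieHom R n o) :=
  fun p q h => by
    obtain ⟨h₁, -, -, h₂⟩ := fromBlocks_inj.1 h
    exact Prod.ext h₁ h₂

end Matrix

namespace LieSubalgebra

variable {R n o : Type*} [CommRing R] [Fintype n] [Fintype o] [DecidableEq n] [DecidableEq o]

noncomputable def equivProdOfIsTwoBlockDiagonal (g : LieSubalgebra R (Matrix (n ⊕ o) (n ⊕ o) R))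
    (g₁ : LieSubalgebra R (Matrix n n R)) (g₂ : LieSubalgebra R (Matrix o o R))
    (hdiag : ∀ A ∈ g, A.IsTwoBlockDiagonal)
    (hmem : ∀ B C, fromBlocks B 0 0 C ∈ g ↔ B ∈ g₁ ∧ C ∈ g₂) : g ≃ₗ⁅R⁆ g₁ × g₂ :=
  let f := (fromBlocksDiagLieHom R n o).comp (g₁.incl.prodMap g₂.incl)
  have hf : Function.Injective f := (fromBlocksDiagLieHom_injective R n o).comp
    (Prod.map_injective.2 ⟨Subtype.val_injective, Subtype.val_injective⟩)
  have hrange : (f.range : Set (Matrix (n ⊕ o) (n ⊕ o) R)) = g := by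
    ext A
    constructor
    · rintro ⟨⟨⟨B, hB⟩, ⟨C, hC⟩⟩, rfl⟩
      exact (hmem B C).2 ⟨hB, hC⟩
    · intro hA
      have hA' := (hdiag A hA).eq_fromBlocks
      rw [SetLike.mem_coe, hA', hmem] at hA
      exact ⟨(⟨_, hA.1⟩, ⟨_, hA.2⟩), hA'.symm⟩
  ((LieEquiv.ofInjective f hf).trans (LieEquiv.ofEq _ _ hrange)).symm

end LieSubalgebra

theorem stmt_15_general (k m : ℕ)
    (η₁ : Matrix (Fin k) (Fin k) ℝ) (hη₁inv : IsUnit η₁)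
    (η₂ : Matrix (Fin m) (Fin m) ℝ)
    (θ₂ : Matrix (Fin m) (Fin m) ℝ) (hθ₂inv : IsUnit θ₂)
    (η θ : Matrix (Fin k ⊕ Fin m) (Fin k ⊕ Fin m) ℝ)
    (hη : η = Matrix.fromBlocks η₁ 0 0 η₂)
    (hθ : θ = Matrix.fromBlocks 0 0 0 θ₂)
    (g : LieSubalgebra ℝ (Matrix (Fin k ⊕ Fin m) (Fin k ⊕ Fin m) ℝ))
    (hg : ∀ A, A ∈ g ↔ (A * η + η * Aᵀ = 0 ∧ A * θ + θ * Aᵀ = 0))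
    (g₁ : LieSubalgebra ℝ (Matrix (Fin k) (Fin k) ℝ))
    (hg₁ : ∀ B, B ∈ g₁ ↔ B * η₁ + η₁ * Bᵀ = 0)
    (g₂ : LieSubalgebra ℝ (Matrix (Fin m) (Fin m) ℝ))
    (hg₂ : ∀ C, C ∈ g₂ ↔ (C * η₂ + η₂ * Cᵀ = 0 ∧ C * θ₂ + θ₂ * Cᵀ = 0)) :
    (∀ A : Matrix (Fin k ⊕ Fin m) (Fin k ⊕ Fin m) ℝ,
      (A * η + η * Aᵀ = 0 ∧ A * θ + θ * Aᵀ = 0) →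
      ∃ (B : Matrix (Fin k) (Fin k) ℝ) (C : Matrix (Fin m) (Fin m) ℝ),
        A = Matrix.fromBlocks B 0 0 C ∧
        B * η₁ + η₁ * Bᵀ = 0 ∧
        C * η₂ + η₂ * Cᵀ = 0 ∧ C * θ₂ + θ₂ * Cᵀ = 0) ∧
    ∃ e : g ≃ₗ[ℝ] (g₁ × g₂), ∀ x y : g,
      (e ⁅x, y⁆).1 = ⁅(e x).1, (e y).1⁆ ∧ (e ⁅x, y⁆).2 = ⁅(e x).2, (e y).2⁆ := by
  subst hη hθ
  have hdiag : ∀ A ∈ g, A.IsTwoBlockDiagonal := fun A hA =>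
    isTwoBlockDiagonal_of_mul_add_mul_transpose_eq_zero hη₁inv hθ₂inv ((hg A).1 hA).1
      ((hg A).1 hA).2
  have hmem : ∀ B C, fromBlocks B 0 0 C ∈ g ↔ B ∈ g₁ ∧ C ∈ g₂ := fun B C => by
    simp [hg, hg₁, hg₂, fromBlocks_diag_mul_add_mul_transpose_eq_zero_iff, and_assoc]
  refine ⟨fun A hA => ?_, ?_⟩
  · have hAg := (hg A).2 hA
    have hA' := (hdiag A hAg).eq_fromBlocks
    obtain ⟨hB, hC⟩ := (hmem _ _).1 (hA' ▸ hAg)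
    exact ⟨_, _, hA', (hg₁ _).1 hB, (hg₂ _).1 hC⟩
  · let e := g.equivProdOfIsTwoBlockDiagonal g₁ g₂ hdiag hmem
    exact ⟨e.toLinearEquiv, fun x y =>
      ⟨congrArg Prod.fst (e.map_lie x y), congrArg Prod.snd (e.map_lie x y)⟩⟩

set_option synthInstance.maxHeartbeats 1000000 in
/-- For block diagonal `η = diag(η₁, η₂)` (invertible symmetric blocks) and
`θ = diag(0, θ₂)` (with `θ₂` invertible antisymmetric), every `λ` with `λ η + η λᵀ = 0`
and `λ θ + θ λᵀ = 0` is block diagonal `λ = diag(λ₁, λ₂)` with `λ₁` infinitesimally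
preserving `η₁`, and `λ₂` infinitesimally preserving `η₂` and `θ₂`; consequently the Lie
algebra of all such `λ` is isomorphic to the direct sum of the corresponding two Lie
algebras. -/
theorem stmt_15 (k m : ℕ)
    (η₁ : Matrix (Fin k) (Fin k) ℝ) (hη₁symm : η₁ᵀ = η₁) (hη₁inv : IsUnit η₁)
    (η₂ : Matrix (Fin m) (Fin m) ℝ) (hη₂symm : η₂ᵀ = η₂) (hη₂inv : IsUnit η₂)
    (θ₂ : Matrix (Fin m) (Fin m) ℝ) (hθ₂anti : θ₂ᵀ = -θ₂) (hθ₂inv : IsUnit θ₂)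
    (η θ : Matrix (Fin k ⊕ Fin m) (Fin k ⊕ Fin m) ℝ)
    (hη : η = Matrix.fromBlocks η₁ 0 0 η₂)
    (hθ : θ = Matrix.fromBlocks 0 0 0 θ₂)
    (g : LieSubalgebra ℝ (Matrix (Fin k ⊕ Fin m) (Fin k ⊕ Fin m) ℝ))
    (hg : ∀ A, A ∈ g ↔ (A * η + η * Aᵀ = 0 ∧ A * θ + θ * Aᵀ = 0))
    (g₁ : LieSubalgebra ℝ (Matrix (Fin k) (Fin k) ℝ))
    (hg₁ : ∀ B, B ∈ g₁ ↔ B * η₁ + η₁ * Bᵀ = 0)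
    (g₂ : LieSubalgebra ℝ (Matrix (Fin m) (Fin m) ℝ))
    (hg₂ : ∀ C, C ∈ g₂ ↔ (C * η₂ + η₂ * Cᵀ = 0 ∧ C * θ₂ + θ₂ * Cᵀ = 0)) :
    (∀ A : Matrix (Fin k ⊕ Fin m) (Fin k ⊕ Fin m) ℝ,
      (A * η + η * Aᵀ = 0 ∧ A * θ + θ * Aᵀ = 0) →
      ∃ (B : Matrix (Fin k) (Fin k) ℝ) (C : Matrix (Fin m) (Fin m) ℝ),
        A = Matrix.fromBlocks B 0 0 C ∧
        B * η₁ + η₁ * Bᵀ = 0 ∧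
        C * η₂ + η₂ * Cᵀ = 0 ∧ C * θ₂ + θ₂ * Cᵀ = 0) ∧
    ∃ e : g ≃ₗ[ℝ] (g₁ × g₂), ∀ x y : g,
      (e ⁅x, y⁆).1 = ⁅(e x).1, (e y).1⁆ ∧ (e ⁅x, y⁆).2 = ⁅(e x).2, (e y).2⁆ :=
  stmt_15_general k m η₁ hη₁inv η₂ θ₂ hθ₂inv η θ hη hθ g hg g₁ hg₁ g₂ hg₂
end

section
/- Let n > 2, let η = (η_{μν}) be a constant invertible symmetric real n×n matrix which is block diagonal, η = diag(η₁, η₂) with blocks of sizes k and m (k + m = n, m ≥ 1), and let θ = (θ^{μν}) be the constant antisymmetric n×n matrix θ = diag(0, θ₂) with θ₂ an invertible antisymmetric m×m matrix. If ξ : ℝⁿ → ℝⁿ is a smooth conformal Killing vector field for η that satisfies θ^{μσ} ∂_σ ξ^ν(x) + θ^{σν} ∂_σ ξ^μ(x) = 0 for all x and all μ, ν, then ξ is divergence-free: ∂_μ ξ^μ(x) = 0 for all x ∈ ℝⁿ. In particular, in four dimensions the dilatations and special conformal transformations are obstructed. -/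
open Matrix

/-- For `n = k + m > 2`, block diagonal invertible symmetric
`η = diag(η₁, η₂)` and degenerate antisymmetric `θ = diag(0, θ₂)` with `θ₂` invertible
(`m ≥ 1`), any smooth conformal Killing vector field `ξ` for `η` that preserves `θ` is
divergence free; in particular in four dimensions the dilatations and special conformal
transformations are obstructed. -/
theorem stmt_16 (k m : ℕ) (hm : 1 ≤ m) (hn : 2 < k + m)
    (η₁ : Matrix (Fin k) (Fin k) ℝ) (hη₁symm : η₁ᵀ = η₁) (hη₁inv : IsUnit η₁)
    (η₂ : Matrix (Fin m) (Fin m) ℝ) (hη₂symm : η₂ᵀ = η₂) (hη₂inv : IsUnit η₂)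
    (θ₂ : Matrix (Fin m) (Fin m) ℝ) (hθ₂anti : θ₂ᵀ = -θ₂) (hθ₂inv : IsUnit θ₂)
    (η θ : Matrix (Fin k ⊕ Fin m) (Fin k ⊕ Fin m) ℝ)
    (hη : η = Matrix.fromBlocks η₁ 0 0 η₂)
    (hθ : θ = Matrix.fromBlocks 0 0 0 θ₂)
    (ξ : ((Fin k ⊕ Fin m) → ℝ) → ((Fin k ⊕ Fin m) → ℝ)) (hξ : ContDiff ℝ (⊤ : ℕ∞) ξ)
    (hck : ∀ (x : (Fin k ⊕ Fin m) → ℝ) (μ ν : Fin k ⊕ Fin m),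
      (∑ ρ, η μ ρ * fderiv ℝ ξ x (Pi.single ν 1) ρ) +
        (∑ ρ, η ν ρ * fderiv ℝ ξ x (Pi.single μ 1) ρ) =
      (2 / ((k + m : ℕ) : ℝ)) * η μ ν * ∑ ρ, fderiv ℝ ξ x (Pi.single ρ 1) ρ)
    (hpres : ∀ (x : (Fin k ⊕ Fin m) → ℝ) (μ ν : Fin k ⊕ Fin m),
      (∑ σ, θ μ σ * fderiv ℝ ξ x (Pi.single σ 1) ν) +
        (∑ σ, θ σ ν * fderiv ℝ ξ x (Pi.single σ 1) μ) = 0) :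
    ∀ x : (Fin k ⊕ Fin m) → ℝ, (∑ μ, fderiv ℝ ξ x (Pi.single μ 1) μ) = 0 := by
  intro x
  set D : ℝ := ∑ μ, fderiv ℝ ξ x (Pi.single μ 1) μ with hD
  set E : Matrix (Fin m) (Fin m) ℝ :=
    fun i j => fderiv ℝ ξ x (Pi.single (Sum.inr i) 1) (Sum.inr j) with hE
  have hdetθ : IsUnit θ₂.det := (Matrix.isUnit_iff_isUnit_det θ₂).mp hθ₂inv
  have hdetη : IsUnit η₂.det := (Matrix.isUnit_iff_isUnit_det η₂).mp hη₂inv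
  have hsym : ∀ a b, η₂ a b = η₂ b a := fun a b => by
    rw [show η₂ a b = η₂ᵀ b a from rfl, hη₂symm]
  -- step 1: θ₂ * E + Eᵀ * θ₂ = 0
  have h1 : θ₂ * E + Eᵀ * θ₂ = 0 := by
    ext i j
    have h := hpres x (Sum.inr i) (Sum.inr j)
    simp only [hθ, Fintype.sum_sum_type, Matrix.fromBlocks_apply₂₁,
      Matrix.fromBlocks_apply₂₂, Matrix.fromBlocks_apply₁₂, Matrix.zero_apply,
      zero_mul, Finset.sum_const_zero, zero_add] at h
    have e2 : (∑ s, θ₂ s j * fderiv ℝ ξ x (Pi.single (Sum.inr s) 1) (Sum.inr i))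
        = ∑ s, Eᵀ i s * θ₂ s j := by
      refine Finset.sum_congr rfl fun s _ => ?_
      exact mul_comm _ _
    rw [e2] at h
    simp only [Matrix.add_apply, Matrix.mul_apply, Matrix.zero_apply]
    exact h
  -- step 2: trace E = 0
  have hθinv : θ₂⁻¹ * θ₂ = 1 := Matrix.nonsing_inv_mul θ₂ hdetθ
  have hθinv' : θ₂ * θ₂⁻¹ = 1 := Matrix.mul_nonsing_inv θ₂ hdetθ
  have h1' : θ₂ * E * θ₂⁻¹ + Eᵀ = 0 := by
    have := congrArg (· * θ₂⁻¹) h1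
    simpa [add_mul, Matrix.mul_assoc, hθinv'] using this
  have htrE : E.trace = 0 := by
    have h := congrArg Matrix.trace h1'
    rw [Matrix.trace_add, Matrix.trace_transpose, Matrix.trace_mul_cycle,
      hθinv, Matrix.one_mul, Matrix.trace_zero] at h
    linarith
  -- step 3: E * η₂ + η₂ * Eᵀ = c • η₂
  set c : ℝ := 2 / ((k + m : ℕ) : ℝ) * D with hc
  have h2 : E * η₂ + η₂ * Eᵀ = c • η₂ := by
    ext i j
    have h := hck x (Sum.inr i) (Sum.inr j)
    rw [← hD] at h
    simp only [hη, Fintype.sum_sum_type, Matrix.fromBlocks_apply₂₁,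
      Matrix.fromBlocks_apply₂₂, Matrix.fromBlocks_apply₁₂, Matrix.zero_apply,
      zero_mul, Finset.sum_const_zero, zero_add] at h
    have e1 : (∑ s, η₂ i s * fderiv ℝ ξ x (Pi.single (Sum.inr j) 1) (Sum.inr s))
        = ∑ s, η₂ i s * Eᵀ s j := by
      refine Finset.sum_congr rfl fun s _ => ?_
      rfl
    have e2 : (∑ s, η₂ j s * fderiv ℝ ξ x (Pi.single (Sum.inr i) 1) (Sum.inr s))
        = ∑ s, E i s * η₂ s j := by
      refine Finset.sum_congr rfl fun s _ => ?_
      rw [hsym j s, mul_comm]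
    rw [e1, e2] at h
    simp only [Matrix.add_apply, Matrix.mul_apply, Matrix.smul_apply, smul_eq_mul]
    rw [hc]
    linear_combination h
  -- step 4: trace gives 2 tr E = c * m
  have hηinv : η₂⁻¹ * η₂ = 1 := Matrix.nonsing_inv_mul η₂ hdetη
  have hηinv' : η₂ * η₂⁻¹ = 1 := Matrix.mul_nonsing_inv η₂ hdetη
  have h2' : E + η₂ * Eᵀ * η₂⁻¹ = c • (1 : Matrix (Fin m) (Fin m) ℝ) := by
    have := congrArg (· * η₂⁻¹) h2
    simpa [add_mul, Matrix.mul_assoc, hηinv', Matrix.smul_mul] using this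
  have htr2 : (2 : ℝ) * E.trace = c * m := by
    have h := congrArg Matrix.trace h2'
    rw [Matrix.trace_add, Matrix.trace_mul_cycle, hηinv,
      Matrix.one_mul, Matrix.trace_transpose, Matrix.trace_smul, Matrix.trace_one] at h
    simp only [smul_eq_mul, Fintype.card_fin] at h
    linarith
  -- conclude
  have hn' : ((k + m : ℕ) : ℝ) ≠ 0 := by positivity
  have hm' : ((m : ℕ) : ℝ) ≠ 0 := Nat.cast_ne_zero.mpr (by omega)
  rw [htrE, mul_zero] at htr2
  have hc0 : c = 0 := by
    rcases mul_eq_zero.mp htr2.symm with h | h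
    · exact h
    · exact absurd h hm'
  rw [hc] at hc0
  have h2n : (2 : ℝ) / ((k + m : ℕ) : ℝ) ≠ 0 := by positivity
  exact (mul_eq_zero.mp hc0).resolve_left h2n
end
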